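/- arXiv:1710.09206 — 10 statements merged into one kernel-verified Lean document; each statement's English description precedes it below -/
import Mathlib

section
/- Let S and T be closed, symmetric, densely defined operators on a complex Hilbert space H such that D(S) ∩ D(T) is dense in H. The operator S + T restricted to D(S) ∩ D(T) is symmetric and densely defined, hence closable; let D(S+T) denote the domain of its closure, i.e. the closure of D(S) ∩ D(T) with respect to the graph norm ψ ↦ (‖ψ‖² + ‖(S+T)ψ‖²)^{1/2}. If D(S+T) ⊆ D(S), then also D(S+T) ⊆ D(T), and therefore D(S+T) ⊆ D(S) ∩ D(T). [Hilbert-space case of Lemma 2.3 (dom_sum).] -/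
open Filter Topology

/-!
Let `V` be the closure of the graph of `S + T` on `D(S) ∩ D(T)`. By hypothesis every point of `V`
has its first coordinate in `D(S)`, so `p ↦ S p.1` is an everywhere defined operator on the
Banach space `V`, and it is closed because `S` is. By the closed graph theorem it is bounded.
Hence if `uₙ → ψ` with `(S + T) uₙ → χ`, then `S uₙ → S ψ`, so `T uₙ → χ - S ψ`, and closedness
of `T` puts `ψ` in `D(T)`.
-/

section

variable {𝕜 E F G : Type*} [NontriviallyNormedField 𝕜]
  [NormedAddCommGroup E] [NormedSpace 𝕜 E] [NormedAddCommGroup F] [NormedSpace 𝕜 F]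
  [NormedAddCommGroup G] [NormedSpace 𝕜 G]

def LinearMap.IsClosedOn (S : E →ₗ[𝕜] F) (D : Submodule 𝕜 E) : Prop :=
  ∀ (u : ℕ → E) (ψ : E) (χ : F), (∀ n, u n ∈ D) →
    Tendsto u atTop (𝓝 ψ) → Tendsto (fun n => S (u n)) atTop (𝓝 χ) → ψ ∈ D ∧ S ψ = χ

theorem exists_seq_of_mem_topologicalClosure_graph {A : E →ₗ[𝕜] F} {D : Submodule 𝕜 E}
    {p : E × F} (hp : p ∈ (D.map (LinearMap.id.prod A)).topologicalClosure) :
    ∃ u : ℕ → E, (∀ n, u n ∈ D) ∧ Tendsto u atTop (𝓝 p.1) ∧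
      Tendsto (fun n => A (u n)) atTop (𝓝 p.2) := by
  obtain ⟨v, hv, hvp⟩ := mem_closure_iff_seq_limit.1 hp
  choose u hu huv using fun n => Submodule.mem_map.1 (hv n)
  have hfst : (fun n => (v n).1) = u := funext fun n => by rw [← huv n]; rfl
  have hsnd : (fun n => (v n).2) = fun n => A (u n) := funext fun n => by rw [← huv n]; rfl
  exact ⟨u, hu, hfst ▸ (continuous_fst.tendsto p).comp hvp,
    hsnd ▸ (continuous_snd.tendsto p).comp hvp⟩

variable [CompleteSpace E] [CompleteSpace F] [CompleteSpace G]

theorem LinearMap.IsClosedOn.continuous_comp_fst {S : E →ₗ[𝕜] F} {D : Submodule 𝕜 E}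
    (hS : S.IsClosedOn D) {V : Submodule 𝕜 (E × G)} (hV : IsClosed (V : Set (E × G)))
    (hVD : ∀ p ∈ V, p.1 ∈ D) :
    Continuous (S ∘ₗ LinearMap.fst 𝕜 E G ∘ₗ V.subtype) := by
  have : CompleteSpace V := hV.completeSpace_coe
  refine LinearMap.continuous_of_seq_closed_graph _ fun w p χ hwp hSw => ?_
  have hfst := (continuous_fst.comp continuous_subtype_val).tendsto p |>.comp hwp
  exact (hS _ _ χ (fun n => hVD _ (w n).2) hfst hSw).2.symm

theorem LinearMap.IsClosedOn.tendsto_apply_fst {S : E →ₗ[𝕜] F} {D : Submodule 𝕜 E}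
    (hS : S.IsClosedOn D) {V : Submodule 𝕜 (E × G)} (hV : IsClosed (V : Set (E × G)))
    (hVD : ∀ p ∈ V, p.1 ∈ D) {v : ℕ → E × G} {p : E × G} (hv : ∀ n, v n ∈ V)
    (hvp : Tendsto v atTop (𝓝 p)) :
    Tendsto (fun n => S (v n).1) atTop (𝓝 (S p.1)) := by
  have hpV : p ∈ V := hV.mem_of_tendsto hvp (Eventually.of_forall hv)
  have hw : Tendsto (fun n => (⟨v n, hv n⟩ : V)) atTop (𝓝 ⟨p, hpV⟩) :=
    tendsto_subtype_rng.2 hvp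
  exact (hS.continuous_comp_fst hV hVD).tendsto _ |>.comp hw

end

theorem dom_sum_general
    {H : Type*} [NormedAddCommGroup H] [InnerProductSpace ℂ H] [CompleteSpace H]
    (S T : H →ₗ[ℂ] H) (DS DT : Submodule ℂ H)
    (hS_closed : ∀ (u : ℕ → H) (ψ χ : H), (∀ n, u n ∈ DS) →
      Tendsto u atTop (𝓝 ψ) → Tendsto (fun n => S (u n)) atTop (𝓝 χ) →
      ψ ∈ DS ∧ S ψ = χ)
    (hT_closed : ∀ (u : ℕ → H) (ψ χ : H), (∀ n, u n ∈ DT) →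
      Tendsto u atTop (𝓝 ψ) → Tendsto (fun n => T (u n)) atTop (𝓝 χ) →
      ψ ∈ DT ∧ T ψ = χ)
    (h_sub : ∀ ψ : H, (∃ u : ℕ → H, (∀ n, u n ∈ DS ⊓ DT) ∧
        Tendsto u atTop (𝓝 ψ) ∧
        ∃ χ : H, Tendsto (fun n => S (u n) + T (u n)) atTop (𝓝 χ)) → ψ ∈ DS) :
    ∀ ψ : H, (∃ u : ℕ → H, (∀ n, u n ∈ DS ⊓ DT) ∧
        Tendsto u atTop (𝓝 ψ) ∧
        ∃ χ : H, Tendsto (fun n => S (u n) + T (u n)) atTop (𝓝 χ)) → ψ ∈ DT := by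
  rintro ψ ⟨u, hu, hψ, χ, hχ⟩
  set G := (DS ⊓ DT).map (LinearMap.id.prod (S + T))
  set V := G.topologicalClosure
  have hVD : ∀ p ∈ V, p.1 ∈ DS := fun p hp => by
    obtain ⟨v, hv, hvp, hAv⟩ := exists_seq_of_mem_topologicalClosure_graph hp
    exact h_sub p.1 ⟨v, hv, hvp, p.2, hAv⟩
  have huV : ∀ n, (u n, S (u n) + T (u n)) ∈ V := fun n =>
    G.le_topologicalClosure (Submodule.mem_map.2 ⟨u n, hu n, rfl⟩)
  have hSu : Tendsto (fun n => S (u n)) atTop (𝓝 (S ψ)) :=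
    (show S.IsClosedOn DS from hS_closed).tendsto_apply_fst
      (Submodule.isClosed_topologicalClosure _) hVD huV (hψ.prodMk_nhds hχ)
  have hTu : Tendsto (fun n => T (u n)) atTop (𝓝 (χ - S ψ)) := by
    simpa using hχ.sub hSu
  exact (hT_closed u ψ _ (fun n => (hu n).2) hψ hTu).1

/-- Hilbert-space case of Lemma 2.3, `dom_sum`.
`S` and `T` are closed, symmetric, densely defined operators on `H`, encoded as total linear
maps together with their domain submodules `DS`, `DT` (the maps are only used on their domains;
closedness and symmetry are stated relative to the domains).  `D(S)∩D(T)` is dense.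
The domain `D(S+T)` of the closure of `S + T` (defined on `DS ⊓ DT`) consists of those `ψ`
admitting a sequence `u n ∈ DS ⊓ DT` with `u n → ψ` and `(S + T)(u n)` convergent.
If `D(S+T) ⊆ DS`, then `D(S+T) ⊆ DT` (hence `D(S+T) ⊆ DS ⊓ DT`). -/
theorem dom_sum
    {H : Type*} [NormedAddCommGroup H] [InnerProductSpace ℂ H] [CompleteSpace H]
    (S T : H →ₗ[ℂ] H) (DS DT : Submodule ℂ H)
    (h_dense : Dense ((DS ⊓ DT : Submodule ℂ H) : Set H))
    (hS_symm : ∀ ψ ∈ DS, ∀ φ ∈ DS, (inner ℂ (S ψ) φ : ℂ) = inner ℂ ψ (S φ))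
    (hT_symm : ∀ ψ ∈ DT, ∀ φ ∈ DT, (inner ℂ (T ψ) φ : ℂ) = inner ℂ ψ (T φ))
    (hS_closed : ∀ (u : ℕ → H) (ψ χ : H), (∀ n, u n ∈ DS) →
      Tendsto u atTop (𝓝 ψ) → Tendsto (fun n => S (u n)) atTop (𝓝 χ) →
      ψ ∈ DS ∧ S ψ = χ)
    (hT_closed : ∀ (u : ℕ → H) (ψ χ : H), (∀ n, u n ∈ DT) →
      Tendsto u atTop (𝓝 ψ) → Tendsto (fun n => T (u n)) atTop (𝓝 χ) →
      ψ ∈ DT ∧ T ψ = χ)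
    (h_sub : ∀ ψ : H, (∃ u : ℕ → H, (∀ n, u n ∈ DS ⊓ DT) ∧
        Tendsto u atTop (𝓝 ψ) ∧
        ∃ χ : H, Tendsto (fun n => S (u n) + T (u n)) atTop (𝓝 χ)) → ψ ∈ DS) :
    ∀ ψ : H, (∃ u : ℕ → H, (∀ n, u n ∈ DS ⊓ DT) ∧
        Tendsto u atTop (𝓝 ψ) ∧
        ∃ χ : H, Tendsto (fun n => S (u n) + T (u n)) atTop (𝓝 χ)) → ψ ∈ DT :=
  dom_sum_general S T DS DT hS_closed hT_closed h_sub
end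

section
/- Assume the family {S(x)}_{x∈X} satisfies assumption (a2). Then: (i) for every compactly supported continuous map ψ : X → (W, ‖·‖_W), the map x ↦ S(x)ψ(x) from X to H is continuous and compactly supported; (ii) the set of functions x ↦ (S(x)+i)ψ(x), as ψ ranges over all compactly supported continuous maps X → (W, ‖·‖_W), is dense in the Banach space C₀(X,H) with the supremum norm. [Hilbert-space content of Lemma 3.2 (pS_reg-sa): C_c(X,W) is a core on which the family defines an essentially self-adjoint operator on C₀(X,H).] -/
/-!
The resolvent `Rp x = (S x + i)⁻¹ : H → W` inverts an operator depending norm-continuously on `x`,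
and inversion is continuous on the invertible operators from the Banach space `W`; so
`x ↦ Rp x (g x)` is continuous for continuous `g`. Cutting it off by an Urysohn function `φ`
equal to `1` on a compact set outside which `‖g‖ < ε` gives `ψ = φ • Rp (g)` with
`(S + i) ψ = φ • g`, which is `ε`-close to `g`.
-/

theorem ContinuousLinearMap.continuous_of_inverse_family
    {𝕜 : Type*} [NontriviallyNormedField 𝕜] {X : Type*} [TopologicalSpace X]
    {E F : Type*} [NormedAddCommGroup E] [NormedSpace 𝕜 E] [CompleteSpace E]
    [NormedAddCommGroup F] [NormedSpace 𝕜 F]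
    {A : X → E →L[𝕜] F} {R : X → F →L[𝕜] E} (hA : Continuous A)
    (hleft : ∀ x ξ, R x (A x ξ) = ξ) (hright : ∀ x ψ, A x (R x ψ) = ψ) :
    Continuous R := by
  let e : X → E ≃L[𝕜] F := fun x =>
    ContinuousLinearEquiv.equivOfInverse (A x) (R x) (hleft x) (hright x)
  have hR : R = ContinuousLinearMap.inverse ∘ A := by
    funext x
    exact (ContinuousLinearMap.inverse_equiv (e x)).symm
  rw [hR, continuous_iff_continuousAt]
  intro x
  exact (contDiffAt_map_inverse (n := 0) (e x)).continuousAt.comp_of_eq hA.continuousAt rfl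

theorem exists_hasCompactSupport_norm_smul_sub_le
    {X : Type*} [TopologicalSpace X] [LocallyCompactSpace X] [RegularSpace X]
    {E : Type*} [NormedAddCommGroup E] [NormedSpace ℝ E]
    {g : X → E} {C : Set X} (hC : IsCompact C) {ε : ℝ} (hε : 0 ≤ ε)
    (hg : ∀ x ∉ C, ‖g x‖ ≤ ε) :
    ∃ φ : C(X, ℝ), HasCompactSupport φ ∧ ∀ x, ‖φ x • g x - g x‖ ≤ ε := by
  obtain ⟨φ, hφC, -, hφ_supp, hφ_mem⟩ :=
    exists_continuous_one_zero_of_isCompact hC isClosed_empty (Set.disjoint_empty C)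
  refine ⟨φ, hφ_supp, fun x => ?_⟩
  rw [show φ x • g x - g x = (φ x - 1) • g x by rw [sub_smul, one_smul], norm_smul,
    Real.norm_eq_abs]
  by_cases hx : x ∈ C
  · simp [hφC hx, hε]
  · have hφ_le : |φ x - 1| ≤ 1 := by
      rw [abs_le]
      constructor <;> linarith [(hφ_mem x).1, (hφ_mem x).2]
    simpa using mul_le_mul hφ_le (hg x hx) (norm_nonneg _) zero_le_one

theorem pS_reg_sa_core_general
    {X : Type*} [TopologicalSpace X] [LocallyCompactSpace X] [T2Space X]
    {H : Type*} [NormedAddCommGroup H] [InnerProductSpace ℂ H]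
    {W : Type*} [NormedAddCommGroup W] [NormedSpace ℂ W] [CompleteSpace W]
    (ι : W →L[ℂ] H)
    (S : X → (W →L[ℂ] H))
    (Rp : X → (H →L[ℂ] W))
    (hRp1 : ∀ (x : X) (ψ : H), S x (Rp x ψ) + Complex.I • ι (Rp x ψ) = ψ)
    (hRp2 : ∀ (x : X) (ξ : W), Rp x (S x ξ + Complex.I • ι ξ) = ξ)
    (hS_cont : Continuous S) :
    (∀ ψ : X → W, Continuous ψ → HasCompactSupport ψ →
      Continuous (fun x => S x (ψ x)) ∧ HasCompactSupport (fun x => S x (ψ x))) ∧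
    (∀ g : X → H, Continuous g →
      (∀ ε > 0, ∃ C : Set X, IsCompact C ∧ ∀ x ∉ C, ‖g x‖ < ε) →
      ∀ ε > 0, ∃ ψ : X → W, Continuous ψ ∧ HasCompactSupport ψ ∧
        ∀ x : X, ‖S x (ψ x) + Complex.I • ι (ψ x) - g x‖ ≤ ε) := by
  refine ⟨fun ψ hψ hψ_supp => ⟨hS_cont.clm_apply hψ, hψ_supp.mono fun x hx h => ?_⟩, ?_⟩
  · exact hx (by simp [h])
  intro g hg hg_decay ε hε
  have hRp : Continuous Rp :=
    ContinuousLinearMap.continuous_of_inverse_family (A := fun x => S x + Complex.I • ι)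
      (hS_cont.add continuous_const) hRp2 hRp1
  obtain ⟨C, hC, hg_small⟩ := hg_decay ε hε
  obtain ⟨φ, hφ_supp, hφ_approx⟩ :=
    exists_hasCompactSupport_norm_smul_sub_le hC hε.le fun x hx => (hg_small x hx).le
  refine ⟨fun x => φ x • Rp x (g x), φ.continuous.smul (hRp.clm_apply hg),
    hφ_supp.smul_right, fun x => ?_⟩
  rw [ContinuousLinearMap.map_smul_of_tower, ContinuousLinearMap.map_smul_of_tower,
    smul_comm Complex.I, ← smul_add, hRp1]
  exact hφ_approx x

/-- Hilbert-space content of Lemma 3.2, `pS_reg-sa`.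
Setup as in Statement 2 (abstract domain `W` with graph norm of `S x₀`, inclusion `ι`,
symmetry and resolvent data encoding self-adjointness of each `S x`, assumption (a2)
= `hS_cont`).  Conclusions:
(i) for every compactly supported continuous `ψ : X → W`, the map `x ↦ S x (ψ x)` is
continuous and compactly supported;
(ii) the functions `x ↦ (S(x)+i)ψ(x)`, for `ψ` ranging over the compactly supported
continuous maps `X → W`, are sup-norm dense in `C₀(X,H)`: every continuous `g : X → H`
vanishing at infinity is uniformly approximated by such functions. -/
theorem pS_reg_sa_core
    {X : Type*} [TopologicalSpace X] [LocallyCompactSpace X] [T2Space X]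
    {H : Type*} [NormedAddCommGroup H] [InnerProductSpace ℂ H] [CompleteSpace H]
    {W : Type*} [NormedAddCommGroup W] [NormedSpace ℂ W] [CompleteSpace W]
    (ι : W →L[ℂ] H) (hι_inj : Function.Injective ι) (hι_dense : DenseRange ι)
    (S : X → (W →L[ℂ] H))
    (x₀ : X) (h_graph : ∀ ξ : W, ‖ξ‖ ^ 2 = ‖ι ξ‖ ^ 2 + ‖S x₀ ξ‖ ^ 2)
    (h_symm : ∀ (x : X) (ξ η : W), (inner ℂ (S x ξ) (ι η) : ℂ) = inner ℂ (ι ξ) (S x η))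
    (Rp Rm : X → (H →L[ℂ] W))
    (hRp1 : ∀ (x : X) (ψ : H), S x (Rp x ψ) + Complex.I • ι (Rp x ψ) = ψ)
    (hRp2 : ∀ (x : X) (ξ : W), Rp x (S x ξ + Complex.I • ι ξ) = ξ)
    (hRm1 : ∀ (x : X) (ψ : H), S x (Rm x ψ) - Complex.I • ι (Rm x ψ) = ψ)
    (hRm2 : ∀ (x : X) (ξ : W), Rm x (S x ξ - Complex.I • ι ξ) = ξ)
    (hS_cont : Continuous S) :
    (∀ ψ : X → W, Continuous ψ → HasCompactSupport ψ →
      Continuous (fun x => S x (ψ x)) ∧ HasCompactSupport (fun x => S x (ψ x))) ∧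
    (∀ g : X → H, Continuous g →
      (∀ ε > 0, ∃ C : Set X, IsCompact C ∧ ∀ x ∉ C, ‖g x‖ < ε) →
      ∀ ε > 0, ∃ ψ : X → W, Continuous ψ ∧ HasCompactSupport ψ ∧
        ∀ x : X, ‖S x (ψ x) + Complex.I • ι (ψ x) - g x‖ ≤ ε) :=
  pS_reg_sa_core_general ι S Rp hRp1 hRp2 hS_cont
end

section
/- Assume the family {S(x)}_{x∈X} satisfies assumption (a2), and assume in addition that the graph norms of the S(x) are uniformly equivalent: there are constants C₁, C₂ > 0 such that C₁‖ξ‖_W ≤ (‖ξ‖² + ‖S(x)ξ‖²)^{1/2} ≤ C₂‖ξ‖_W for all x ∈ X and ξ ∈ W. Let ψ : X → H be a continuous function vanishing at infinity with ψ(x) ∈ W for every x ∈ X. Then the map x ↦ S(x)ψ(x) is continuous from X to H and vanishes at infinity if and only if ψ, viewed as a map X → (W, ‖·‖_W), is continuous and vanishes at infinity. [Hilbert-space content of the last claim of Lemma 3.2 (pS_reg-sa): Dom S(·) = C₀(X,W).] -/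
open Filter Topology

/-!
The uniform equivalence of graph norms gives, for all `x` and `ξ`,
`C₁ ‖ξ‖_W ≤ ‖ξ‖ + ‖S(x) ξ‖` and `‖S(x) ξ‖ ≤ C₂ ‖ξ‖_W`. The second bound and continuity of
`x ↦ S(x)` in operator norm show that `x ↦ S(x) ψ(x)` inherits continuity and decay from
`ψ : X → W`. Conversely, the first bound controls `ψ(x) - ψ(y)` by
`‖ψ(x) - ψ(y)‖ + ‖S(x) ψ(x) - S(y) ψ(y)‖ + ‖(S(x) - S(y)) ψ(y)‖` and `ψ(x)` by
`‖ψ(x)‖ + ‖S(x) ψ(x)‖`, all of which tend to zero.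
-/

lemma Real.le_sqrt_sq_add_sq (a b : ℝ) : b ≤ √(a ^ 2 + b ^ 2) :=
  (le_abs_self b).trans (Real.abs_le_sqrt (le_add_of_nonneg_left (sq_nonneg a)))

lemma Real.sqrt_sq_add_sq_le_add {a b : ℝ} (ha : 0 ≤ a) (hb : 0 ≤ b) :
    √(a ^ 2 + b ^ 2) ≤ a + b :=
  (Real.sqrt_le_left (add_nonneg ha hb)).2 (by nlinarith)

lemma tendsto_cocompact_zero_iff {X E : Type*} [TopologicalSpace X] [SeminormedAddCommGroup E]
    {f : X → E} :
    Tendsto f (cocompact X) (𝓝 0) ↔ ∀ ε > 0, ∃ C : Set X, IsCompact C ∧ ∀ x ∉ C, ‖f x‖ < ε := by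
  simp [hasBasis_cocompact.tendsto_iff Metric.nhds_basis_ball]

section GraphLowerBound

variable {𝕜 X W H : Type*} [NontriviallyNormedField 𝕜]
  [SeminormedAddCommGroup W] [NormedSpace 𝕜 W] [SeminormedAddCommGroup H] [NormedSpace 𝕜 H]
  {ι : W →L[𝕜] H} {S : X → W →L[𝕜] H} {C : ℝ}

lemma tendsto_zero_of_le_norm_add_norm {α : Type*} {l : Filter α} (hC : 0 < C)
    (hlow : ∀ x ξ, C * ‖ξ‖ ≤ ‖ι ξ‖ + ‖S x ξ‖) {x : α → X} {φ : α → W}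
    (hι : Tendsto (fun a => ι (φ a)) l (𝓝 0)) (hS : Tendsto (fun a => S (x a) (φ a)) l (𝓝 0)) :
    Tendsto φ l (𝓝 0) := by
  refine squeeze_zero_norm (fun a => (le_inv_mul_iff₀ hC).2 (hlow (x a) (φ a))) ?_
  simpa using (hι.norm.add hS.norm).const_mul C⁻¹

lemma continuous_of_le_norm_add_norm [TopologicalSpace X] (hC : 0 < C)
    (hlow : ∀ x ξ, C * ‖ξ‖ ≤ ‖ι ξ‖ + ‖S x ξ‖) (hS_cont : Continuous S) {ψ : X → W}
    (hιψ : Continuous fun x => ι (ψ x)) (hSψ : Continuous fun x => S x (ψ x)) :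
    Continuous ψ := by
  refine continuous_iff_continuousAt.2 fun y => tendsto_sub_nhds_zero_iff.1 ?_
  refine tendsto_zero_of_le_norm_add_norm (x := id) hC hlow ?_ ?_
  · simpa only [map_sub, sub_self] using (hιψ.tendsto y).sub_const (ι (ψ y))
  · have hSψy : Continuous fun x => S x (ψ y) := hS_cont.clm_apply continuous_const
    simpa only [id, map_sub, sub_self] using (hSψ.tendsto y).sub (hSψy.tendsto y)

end GraphLowerBound

theorem pS_reg_sa_dom_general
    {X : Type*} [TopologicalSpace X]
    {H : Type*} [NormedAddCommGroup H] [InnerProductSpace ℂ H]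
    {W : Type*} [NormedAddCommGroup W] [NormedSpace ℂ W]
    (ι : W →L[ℂ] H)
    (S : X → (W →L[ℂ] H))
    (hS_cont : Continuous S)
    (C₁ C₂ : ℝ) (hC₁ : 0 < C₁)
    (h_unif : ∀ (x : X) (ξ : W),
      C₁ * ‖ξ‖ ≤ Real.sqrt (‖ι ξ‖ ^ 2 + ‖S x ξ‖ ^ 2) ∧
      Real.sqrt (‖ι ξ‖ ^ 2 + ‖S x ξ‖ ^ 2) ≤ C₂ * ‖ξ‖)
    (ψ : X → W)
    (hψ_cont : Continuous (fun x => ι (ψ x)))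
    (hψ_zero : ∀ ε > 0, ∃ C : Set X, IsCompact C ∧ ∀ x ∉ C, ‖ι (ψ x)‖ < ε) :
    (Continuous (fun x => S x (ψ x)) ∧
      (∀ ε > 0, ∃ C : Set X, IsCompact C ∧ ∀ x ∉ C, ‖S x (ψ x)‖ < ε)) ↔
    (Continuous ψ ∧
      (∀ ε > 0, ∃ C : Set X, IsCompact C ∧ ∀ x ∉ C, ‖ψ x‖ < ε)) := by
  have hlow : ∀ x ξ, C₁ * ‖ξ‖ ≤ ‖ι ξ‖ + ‖S x ξ‖ := fun x ξ =>
    (h_unif x ξ).1.trans (Real.sqrt_sq_add_sq_le_add (norm_nonneg _) (norm_nonneg _))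
  have hup : ∀ x ξ, ‖S x ξ‖ ≤ C₂ * ‖ξ‖ := fun x ξ =>
    (Real.le_sqrt_sq_add_sq _ _).trans (h_unif x ξ).2
  simp only [← tendsto_cocompact_zero_iff] at hψ_zero ⊢
  constructor
  · rintro ⟨hSψ_cont, hSψ_zero⟩
    exact ⟨continuous_of_le_norm_add_norm hC₁ hlow hS_cont hψ_cont hSψ_cont,
      tendsto_zero_of_le_norm_add_norm (x := id) hC₁ hlow hψ_zero hSψ_zero⟩
  · rintro ⟨hψW_cont, hψW_zero⟩
    refine ⟨hS_cont.clm_apply hψW_cont, squeeze_zero_norm (fun x => hup x (ψ x)) ?_⟩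
    simpa using hψW_zero.norm.const_mul C₂

/-- Hilbert-space content of the last claim of Lemma 3.2, `pS_reg-sa`.
Setup as in Statement 2 (abstract domain `W` = graph norm of `S x₀`, inclusion `ι`,
symmetry and resolvent data encoding self-adjointness, assumption (a2) = `hS_cont`).
Assume the graph norms of the `S x` are uniformly equivalent (constants `C₁, C₂ > 0`).
Let `ψ : X → W` be such that `x ↦ ι (ψ x)` (i.e. `ψ` viewed in `H`) is continuous and
vanishes at infinity.  Then `x ↦ S x (ψ x)` is continuous and vanishes at infinity iff
`ψ : X → W` is continuous and vanishes at infinity in the `W`-norm. -/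
theorem pS_reg_sa_dom
    {X : Type*} [TopologicalSpace X] [LocallyCompactSpace X] [T2Space X]
    {H : Type*} [NormedAddCommGroup H] [InnerProductSpace ℂ H] [CompleteSpace H]
    {W : Type*} [NormedAddCommGroup W] [NormedSpace ℂ W] [CompleteSpace W]
    (ι : W →L[ℂ] H) (hι_inj : Function.Injective ι) (hι_dense : DenseRange ι)
    (S : X → (W →L[ℂ] H))
    (x₀ : X) (h_graph : ∀ ξ : W, ‖ξ‖ ^ 2 = ‖ι ξ‖ ^ 2 + ‖S x₀ ξ‖ ^ 2)
    (h_symm : ∀ (x : X) (ξ η : W), (inner ℂ (S x ξ) (ι η) : ℂ) = inner ℂ (ι ξ) (S x η))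
    (hS_cont : Continuous S)
    (C₁ C₂ : ℝ) (hC₁ : 0 < C₁) (hC₂ : 0 < C₂)
    (h_unif : ∀ (x : X) (ξ : W),
      C₁ * ‖ξ‖ ≤ Real.sqrt (‖ι ξ‖ ^ 2 + ‖S x ξ‖ ^ 2) ∧
      Real.sqrt (‖ι ξ‖ ^ 2 + ‖S x ξ‖ ^ 2) ≤ C₂ * ‖ξ‖)
    (ψ : X → W)
    (hψ_cont : Continuous (fun x => ι (ψ x)))
    (hψ_zero : ∀ ε > 0, ∃ C : Set X, IsCompact C ∧ ∀ x ∉ C, ‖ι (ψ x)‖ < ε) :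
    (Continuous (fun x => S x (ψ x)) ∧
      (∀ ε > 0, ∃ C : Set X, IsCompact C ∧ ∀ x ∉ C, ‖S x (ψ x)‖ < ε)) ↔
    (Continuous ψ ∧
      (∀ ε > 0, ∃ C : Set X, IsCompact C ∧ ∀ x ∉ C, ‖ψ x‖ < ε)) :=
  pS_reg_sa_dom_general ι S hS_cont C₁ C₂ hC₁ h_unif ψ hψ_cont hψ_zero
end

section
/- Assume the family {S(x)}_{x∈X} satisfies assumptions (a1), (a2) and (a3) with compact set K ⊆ X, and let φ : X → [0,1] be a continuous compactly supported function with φ(x) = 1 for all x ∈ K. Define Q(x) := φ(x)(S(x)−i)⁻¹ + (1−φ(x))S(x)⁻¹ for x ∈ X∖K, and Q(x) := (S(x)−i)⁻¹ for x ∈ K (consistent since 1−φ vanishes on K). Then: (i) Q : X → B(H) is norm-continuous and uniformly bounded, with Q(x)H ⊆ W for every x; (ii) for every x ∈ X and ψ ∈ H one has S(x)(Q(x)ψ) − ψ = iφ(x)(S(x)−i)⁻¹ψ, and for every ψ ∈ W one has Q(x)(S(x)ψ) − ψ = iφ(x)(S(x)−i)⁻¹ψ; (iii) the map x ↦ iφ(x)(S(x)−i)⁻¹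 is norm-continuous, compactly supported, and takes values in the compact operators on H. In particular Q is a parametrix for S(·) modulo the compact endomorphisms C₀(X, K(H)) of the Hilbert C₀(X)-module C₀(X,H), so S(·) is Fredholm. [Hilbert-space case of Proposition 3.4 (pS_Fred).] -/
/-!
Symmetry of `S(x)` makes `⟪S(x)ξ, ξ⟫` real, so `‖(S(x) − i)ξ‖² = ‖S(x)ξ‖² + ‖ξ‖²` and the
resolvent has norm at most `1`. Since inversion is continuous on invertible operators, the
resolvent is norm-continuous in `x`, and so is `S(x)⁻¹` on the open set `X ∖ K`; there the bound
`c` lets `(1 − φ)S⁻¹` extend continuously by `0` across `K`. The parametrix identities are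
algebra, the error term being `iφ(S − i)⁻¹`, which is compact because the inclusion `W → H` is.
-/

open Filter Topology

section

variable {H : Type*} [NormedAddCommGroup H] [InnerProductSpace ℂ H]

theorem norm_le_norm_sub_I_smul {u v : H} (huv : inner ℂ u v = inner ℂ v u) :
    ‖v‖ ≤ ‖u - Complex.I • v‖ := by
  have him : (inner ℂ u v).im = 0 := by
    rw [← Complex.conj_eq_iff_im, inner_conj_symm, huv]
  have hsq : ‖u - Complex.I • v‖ ^ 2 = ‖u‖ ^ 2 + ‖v‖ ^ 2 := by
    rw [@norm_sub_sq ℂ, inner_smul_right, norm_smul]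
    simp [him]
  nlinarith [norm_nonneg v, norm_nonneg (u - Complex.I • v), sq_nonneg ‖u‖]

theorem norm_comp_le_one_of_sub_I_smul_rightInverse {W : Type*} [NormedAddCommGroup W]
    [NormedSpace ℂ W] {ι S : W →L[ℂ] H} {R : H →L[ℂ] W}
    (hS : ∀ ξ, inner ℂ (S ξ) (ι ξ) = inner ℂ (ι ξ) (S ξ))
    (hR : ∀ ψ, S (R ψ) - Complex.I • ι (R ψ) = ψ) : ‖ι.comp R‖ ≤ 1 :=
  ContinuousLinearMap.opNorm_le_bound _ zero_le_one fun ψ => by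
    simpa [hR] using norm_le_norm_sub_I_smul (hS (R ψ))

end

theorem ContinuousAt.of_eventually_inverse {𝕜 X E F : Type*} [NontriviallyNormedField 𝕜]
    [TopologicalSpace X] [NormedAddCommGroup E] [NormedSpace 𝕜 E] [CompleteSpace E]
    [NormedAddCommGroup F] [NormedSpace 𝕜 F] {A : X → E →L[𝕜] F} {B : X → F →L[𝕜] E}
    {x : X} (hA : ContinuousAt A x)
    (hAB : ∀ᶠ y in 𝓝 x, Function.LeftInverse (B y) (A y) ∧ Function.RightInverse (B y) (A y)) :
    ContinuousAt B x := by
  have hinv : ∀ᶠ y in 𝓝 x, A y ∘L B y = .id 𝕜 F ∧ B y ∘L A y = .id 𝕜 E :=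
    hAB.mono fun y h => ⟨ContinuousLinearMap.ext h.2, ContinuousLinearMap.ext h.1⟩
  have hB : (fun y => (A y).inverse) =ᶠ[𝓝 x] B :=
    hinv.mono fun y h => ContinuousLinearMap.inverse_eq h.1 h.2
  obtain ⟨hx₁, hx₂⟩ := hinv.self_of_nhds
  have hcont : ContinuousAt ContinuousLinearMap.inverse (A x) :=
    ((ContinuousLinearMap.IsInvertible.of_inverse hx₁ hx₂).contDiffAt_map_inverse
      (n := 0)).continuousAt
  exact (hcont.comp hA).congr hB

section

variable {X E : Type*} [SeminormedAddCommGroup E] [NormedSpace ℂ E]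
  {g : X → ℂ} {T : X → E} {K : Set X} {c : ℝ}

theorem norm_smul_le_of_eqOn_zero (hgK : ∀ x ∈ K, g x = 0) (hT : ∀ x ∉ K, ‖T x‖ ≤ c)
    (x : X) : ‖g x • T x‖ ≤ c * ‖g x‖ := by
  by_cases hx : x ∈ K
  · simp [hgK x hx]
  · rw [norm_smul, mul_comm]
    exact mul_le_mul_of_nonneg_right (hT x hx) (norm_nonneg _)

theorem continuous_smul_of_eqOn_zero [TopologicalSpace X] (hK : IsClosed K) (hg : Continuous g)
    (hgK : ∀ x ∈ K, g x = 0) (hTc : ContinuousOn T Kᶜ) (hT : ∀ x ∉ K, ‖T x‖ ≤ c) :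
    Continuous fun x => g x • T x := by
  refine continuous_iff_continuousAt.2 fun x => ?_
  by_cases hx : x ∈ K
  · have hlim : Tendsto (fun y => c * ‖g y‖) (𝓝 x) (𝓝 0) := by
      simpa [hgK x hx] using (hg.norm.const_mul c).tendsto x
    rw [ContinuousAt, hgK x hx, zero_smul]
    exact squeeze_zero_norm (norm_smul_le_of_eqOn_zero hgK hT) hlim
  · exact hg.continuousAt.smul (hTc.continuousAt (hK.isOpen_compl.mem_nhds hx))

end

section

variable {X E : Type*} [SeminormedAddCommGroup E] [NormedSpace ℂ E] {φ : X → ℝ} {K : Set X}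
  {A B : X → E}

theorem norm_ofReal_smul_add_one_sub_smul_le {a b : ℝ} (hφ01 : ∀ x, φ x ∈ Set.Icc (0 : ℝ) 1)
    (hφK : ∀ x ∈ K, φ x = 1) (hA : ∀ x, ‖A x‖ ≤ a) (hB : ∀ x ∉ K, ‖B x‖ ≤ b) (x : X) :
    ‖(φ x : ℂ) • A x + ((1 : ℂ) - φ x) • B x‖ ≤ max a b := by
  obtain ⟨hφ0, hφ1⟩ := hφ01 x
  have h1φ : ‖(1 : ℂ) - φ x‖ = 1 - φ x := by
    rw [← Complex.ofReal_one, ← Complex.ofReal_sub, Complex.norm_real,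
      Real.norm_of_nonneg (sub_nonneg.2 hφ1)]
  calc ‖(φ x : ℂ) • A x + ((1 : ℂ) - φ x) • B x‖
      ≤ ‖(φ x : ℂ) • A x‖ + ‖((1 : ℂ) - φ x) • B x‖ := norm_add_le _ _
    _ ≤ φ x * a + b * (1 - φ x) := by
        refine add_le_add ?_ (h1φ ▸ norm_smul_le_of_eqOn_zero (g := fun y => 1 - (φ y : ℂ))
          (fun y hy => by rw [hφK y hy, Complex.ofReal_one, sub_self]) hB x)
        rw [norm_smul, Complex.norm_real, Real.norm_of_nonneg hφ0]
        exact mul_le_mul_of_nonneg_left (hA x) hφ0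
    _ ≤ max a b := by nlinarith [le_max_left a b, le_max_right a b]

theorem continuous_ofReal_smul_add_one_sub_smul [TopologicalSpace X] (hK : IsClosed K)
    (hφ : Continuous φ) (hφK : ∀ x ∈ K, φ x = 1) (hA : Continuous A) (hBc : ContinuousOn B Kᶜ)
    {b : ℝ} (hB : ∀ x ∉ K, ‖B x‖ ≤ b) :
    Continuous fun x => (φ x : ℂ) • A x + ((1 : ℂ) - φ x) • B x :=
  have hφℂ : Continuous fun x => (φ x : ℂ) := Complex.continuous_ofReal.comp hφ
  (hφℂ.smul hA).add (continuous_smul_of_eqOn_zero hK (continuous_const.sub hφℂ)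
    (fun y hy => by rw [hφK y hy, Complex.ofReal_one, sub_self]) hBc hB)

end

section

variable {H W : Type*} [NormedAddCommGroup H] [NormedSpace ℂ H]
  [NormedAddCommGroup W] [NormedSpace ℂ W] {ι S : W →L[ℂ] H} {R T : H →L[ℂ] W} {t : ℂ}

theorem apply_smul_add_one_sub_smul_sub (hR : ∀ ψ, S (R ψ) - Complex.I • ι (R ψ) = ψ)
    (hT : t = 1 ∨ Function.RightInverse T S) (ψ : H) :
    S ((t • R + (1 - t) • T) ψ) - ψ = (Complex.I * t) • ι (R ψ) := by
  have hRψ : S (R ψ) = ψ + Complex.I • ι (R ψ) := sub_eq_iff_eq_add.mp (hR ψ)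
  have hTψ : (1 - t) • S (T ψ) = (1 - t) • ψ := by
    rcases hT with rfl | hT
    · simp
    · rw [hT ψ]
  simp only [add_apply, smul_apply, map_add, map_smul, hRψ, hTψ]
  module

theorem smul_add_one_sub_smul_apply_sub (hR : ∀ ξ, R (S ξ - Complex.I • ι ξ) = ξ)
    (hT : t = 1 ∨ Function.LeftInverse T S) (ξ : W) :
    ι ((t • R + (1 - t) • T) (S ξ)) - ι ξ = (Complex.I * t) • ι (R (ι ξ)) := by
  have hRξ : R (S ξ) = ξ + Complex.I • R (ι ξ) := by
    have h := hR ξ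
    rw [map_sub, map_smul] at h
    exact sub_eq_iff_eq_add.mp h
  have hTξ : (1 - t) • T (S ξ) = (1 - t) • ξ := by
    rcases hT with rfl | hT
    · simp
    · rw [hT ξ]
  simp only [add_apply, smul_apply, hRξ, hTξ, map_add, map_smul]
  module

end

theorem pS_Fred_general
    {X : Type*} [TopologicalSpace X] [T2Space X]
    {H : Type*} [NormedAddCommGroup H] [InnerProductSpace ℂ H]
    {W : Type*} [NormedAddCommGroup W] [NormedSpace ℂ W] [CompleteSpace W]
    (ι : W →L[ℂ] H)
    (hι_cpt : IsCompactOperator ⇑ι)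
    (S : X → (W →L[ℂ] H))
    (h_symm : ∀ (x : X) (ξ η : W), (inner ℂ (S x ξ) (ι η) : ℂ) = inner ℂ (ι ξ) (S x η))
    (Rm : X → (H →L[ℂ] W))
    (hRm1 : ∀ (x : X) (ψ : H), S x (Rm x ψ) - Complex.I • ι (Rm x ψ) = ψ)
    (hRm2 : ∀ (x : X) (ξ : W), Rm x (S x ξ - Complex.I • ι ξ) = ξ)
    (hS_cont : Continuous S)
    (K : Set X) (hK : IsCompact K)
    (c : ℝ) (hc : 0 < c)
    (Sinv : X → (H →L[ℂ] W))
    (hSinv1 : ∀ x ∉ K, ∀ ψ : H, S x (Sinv x ψ) = ψ)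
    (hSinv2 : ∀ x ∉ K, ∀ ξ : W, Sinv x (S x ξ) = ξ)
    (hSinv_bdd : ∀ x ∉ K, ∀ ψ : H, ‖ι (Sinv x ψ)‖ ≤ c * ‖ψ‖)
    (φ : X → ℝ) (hφ_cont : Continuous φ) (hφ_supp : HasCompactSupport φ)
    (hφ01 : ∀ x, φ x ∈ Set.Icc (0 : ℝ) 1) (hφK : ∀ x ∈ K, φ x = 1)
    (Q : X → (H →L[ℂ] W))
    (hQ : ∀ x, Q x = (φ x : ℂ) • Rm x + ((1 : ℂ) - (φ x : ℂ)) • Sinv x) :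
    (Continuous (fun x => (ι.comp (Q x) : H →L[ℂ] H)) ∧
      ∃ b : ℝ, ∀ x : X, ‖(ι.comp (Q x) : H →L[ℂ] H)‖ ≤ b) ∧
    ((∀ (x : X) (ψ : H),
        S x (Q x ψ) - ψ = (Complex.I * (φ x : ℂ)) • ι (Rm x ψ)) ∧
      (∀ (x : X) (ξ : W),
        ι (Q x (S x ξ)) - ι ξ = (Complex.I * (φ x : ℂ)) • ι (Rm x (ι ξ)))) ∧
    (Continuous (fun x => (Complex.I * (φ x : ℂ)) • (ι.comp (Rm x) : H →L[ℂ] H)) ∧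
      HasCompactSupport (fun x => (Complex.I * (φ x : ℂ)) • (ι.comp (Rm x) : H →L[ℂ] H)) ∧
      ∀ x : X, IsCompactOperator
        ⇑((Complex.I * (φ x : ℂ)) • (ι.comp (Rm x) : H →L[ℂ] H))) := by
  have hRm_cont : Continuous Rm := continuous_iff_continuousAt.2 fun x =>
    ContinuousAt.of_eventually_inverse (A := fun y => S y - Complex.I • ι)
      (hS_cont.sub continuous_const).continuousAt (.of_forall fun y => ⟨hRm2 y, hRm1 y⟩)
  have hSinv_cont : ContinuousOn Sinv Kᶜ := fun x hx =>
    (ContinuousAt.of_eventually_inverse hS_cont.continuousAt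
      (eventually_of_mem (hK.isClosed.isOpen_compl.mem_nhds hx) fun y hy =>
        ⟨hSinv2 y hy, hSinv1 y hy⟩)).continuousWithinAt
  have hRm_norm : ∀ x, ‖ι.comp (Rm x)‖ ≤ 1 := fun x =>
    norm_comp_le_one_of_sub_I_smul_rightInverse (fun ξ => h_symm x ξ ξ) (hRm1 x)
  have hSinv_norm : ∀ x ∉ K, ‖ι.comp (Sinv x)‖ ≤ c := fun x hx =>
    ContinuousLinearMap.opNorm_le_bound _ hc.le (hSinv_bdd x hx)
  have hιQ : ∀ x, ι.comp (Q x) =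
      (φ x : ℂ) • ι.comp (Rm x) + ((1 : ℂ) - φ x) • ι.comp (Sinv x) := fun x => by
    rw [hQ, ContinuousLinearMap.comp_add, ContinuousLinearMap.comp_smul,
      ContinuousLinearMap.comp_smul]
  have hφ_or : ∀ x, (φ x : ℂ) = 1 ∨ x ∉ K := fun x =>
    (em (x ∈ K)).imp_left fun hx => by rw [hφK x hx, Complex.ofReal_one]
  refine ⟨⟨?_, max 1 c, fun x => ?_⟩, ⟨fun x ψ => ?_, fun x ξ => ?_⟩, ?_, ?_, fun x => ?_⟩
  · simpa only [hιQ] using continuous_ofReal_smul_add_one_sub_smul hK.isClosed hφ_cont hφK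
      (continuous_const.clm_comp hRm_cont) (continuousOn_const.clm_comp hSinv_cont) hSinv_norm
  · exact hιQ x ▸ norm_ofReal_smul_add_one_sub_smul_le hφ01 hφK hRm_norm hSinv_norm x
  · rw [hQ]
    exact apply_smul_add_one_sub_smul_sub (hRm1 x) ((hφ_or x).imp_right (hSinv1 x)) ψ
  · rw [hQ]
    exact smul_add_one_sub_smul_apply_sub (hRm2 x) ((hφ_or x).imp_right (hSinv2 x)) ξ
  · exact (continuous_const.mul (Complex.continuous_ofReal.comp hφ_cont)).smul
      (continuous_const.clm_comp hRm_cont)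
  · exact ((hφ_supp.comp_left Complex.ofReal_zero).mul_left (f := fun _ => Complex.I)).smul_right
  · exact (hι_cpt.comp_clm (Rm x)).smul (Complex.I * φ x)

/-- Hilbert-space case of Proposition 3.4, `pS_Fred`.
Setup as in Statement 2, with assumption (a1) (`hι_cpt`: the inclusion `ι : W → H` is
compact), (a2) (`hS_cont`), and (a3): a compact set `K` and `c > 0` such that for `x ∉ K`
the operator `S x : W → H` is invertible with inverse `Sinv x` (valued in `W`) of norm
at most `c`.  `Rm x` is the resolvent `(S(x) − i)⁻¹` (valued in `W`).
Let `φ : X → [0,1]` be continuous and compactly supported with `φ = 1` on `K`, and let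
`Q x := φ(x)•(S(x)−i)⁻¹ + (1−φ(x))•S(x)⁻¹` (valued in `W`, so `Q(x)H ⊆ W` automatically).
Then: (i) `x ↦ ι ∘ Q x` is norm-continuous and uniformly bounded;
(ii) `S x (Q x ψ) − ψ = iφ(x)(S(x)−i)⁻¹ψ` for all `ψ ∈ H`, and
`Q x (S x ξ) − ξ = iφ(x)(S(x)−i)⁻¹(ι ξ)` for all `ξ ∈ W`;
(iii) `x ↦ iφ(x)(S(x)−i)⁻¹` is norm-continuous, compactly supported, and takes values in
the compact operators on `H`.  (Hence `Q` is a parametrix for `S(·)` modulo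
`C₀(X, K(H))`, so `S(·)` is Fredholm.) -/
theorem pS_Fred
    {X : Type*} [TopologicalSpace X] [LocallyCompactSpace X] [T2Space X]
    {H : Type*} [NormedAddCommGroup H] [InnerProductSpace ℂ H] [CompleteSpace H]
    {W : Type*} [NormedAddCommGroup W] [NormedSpace ℂ W] [CompleteSpace W]
    (ι : W →L[ℂ] H) (hι_inj : Function.Injective ι) (hι_dense : DenseRange ι)
    (hι_cpt : IsCompactOperator ⇑ι)
    (S : X → (W →L[ℂ] H))
    (x₀ : X) (h_graph : ∀ ξ : W, ‖ξ‖ ^ 2 = ‖ι ξ‖ ^ 2 + ‖S x₀ ξ‖ ^ 2)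
    (h_symm : ∀ (x : X) (ξ η : W), (inner ℂ (S x ξ) (ι η) : ℂ) = inner ℂ (ι ξ) (S x η))
    (Rp Rm : X → (H →L[ℂ] W))
    (hRp1 : ∀ (x : X) (ψ : H), S x (Rp x ψ) + Complex.I • ι (Rp x ψ) = ψ)
    (hRp2 : ∀ (x : X) (ξ : W), Rp x (S x ξ + Complex.I • ι ξ) = ξ)
    (hRm1 : ∀ (x : X) (ψ : H), S x (Rm x ψ) - Complex.I • ι (Rm x ψ) = ψ)
    (hRm2 : ∀ (x : X) (ξ : W), Rm x (S x ξ - Complex.I • ι ξ) = ξ)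
    (hS_cont : Continuous S)
    (K : Set X) (hK : IsCompact K)
    (c : ℝ) (hc : 0 < c)
    (Sinv : X → (H →L[ℂ] W))
    (hSinv1 : ∀ x ∉ K, ∀ ψ : H, S x (Sinv x ψ) = ψ)
    (hSinv2 : ∀ x ∉ K, ∀ ξ : W, Sinv x (S x ξ) = ξ)
    (hSinv_bdd : ∀ x ∉ K, ∀ ψ : H, ‖ι (Sinv x ψ)‖ ≤ c * ‖ψ‖)
    (φ : X → ℝ) (hφ_cont : Continuous φ) (hφ_supp : HasCompactSupport φ)
    (hφ01 : ∀ x, φ x ∈ Set.Icc (0 : ℝ) 1) (hφK : ∀ x ∈ K, φ x = 1)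
    (Q : X → (H →L[ℂ] W))
    (hQ : ∀ x, Q x = (φ x : ℂ) • Rm x + ((1 : ℂ) - (φ x : ℂ)) • Sinv x) :
    (Continuous (fun x => (ι.comp (Q x) : H →L[ℂ] H)) ∧
      ∃ b : ℝ, ∀ x : X, ‖(ι.comp (Q x) : H →L[ℂ] H)‖ ≤ b) ∧
    ((∀ (x : X) (ψ : H),
        S x (Q x ψ) - ψ = (Complex.I * (φ x : ℂ)) • ι (Rm x ψ)) ∧
      (∀ (x : X) (ξ : W),
        ι (Q x (S x ξ)) - ι ξ = (Complex.I * (φ x : ℂ)) • ι (Rm x (ι ξ)))) ∧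
    (Continuous (fun x => (Complex.I * (φ x : ℂ)) • (ι.comp (Rm x) : H →L[ℂ] H)) ∧
      HasCompactSupport (fun x => (Complex.I * (φ x : ℂ)) • (ι.comp (Rm x) : H →L[ℂ] H)) ∧
      ∀ x : X, IsCompactOperator
        ⇑((Complex.I * (φ x : ℂ)) • (ι.comp (Rm x) : H →L[ℂ] H))) :=
  pS_Fred_general ι hι_cpt S h_symm Rm hRm1 hRm2 hS_cont K hK c hc Sinv hSinv1 hSinv2 hSinv_bdd φ
    hφ_cont hφ_supp hφ01 hφK Q hQ
end

section
/- Let H be a separable complex Hilbert space and assume the family {S(x)}_{x∈X} satisfies assumptions (a1) and (a2). Then for every point x₁ ∈ X there exist a compact self-adjoint operator A on H, an open neighbourhood O of x₁ with compact closure, and a constant c > 0, such that for every y ∈ O the operator S(y) + A : W → H is bijective and ‖(S(y)+A)⁻¹‖ ≤ c. (In the paper's terminology: there exist locally trivialising families for S(·); the perturbation can be taken to be twice the spectral projection of S(x₁) onto [−1,1].) [Lemma 3.5 (pS_loc_triv_fam).] -/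
/-!
`S x + i ι` is an isomorphism `W ≃ H` (with inverse `Rp x`), and `S x + A ι` differs from it by
the compact operator `(A - i) ι`. By the Fredholm alternative, `S x + A ι` is therefore bijective
as soon as it is injective, and `ker (S x₁)` is finite-dimensional. For `A` the orthogonal
projection onto `ι (ker (S x₁))`, symmetry of `S x₁` makes `S x₁ + A ι` injective, hence an
isomorphism with a lower bound `‖ξ‖ ≤ c ‖(S x₁ + A ι) ξ‖`. By norm continuity of `S`, the bound
`‖ξ‖ ≤ 2c ‖(S y + A ι) ξ‖` persists for `y` near `x₁`, giving injectivity, hence bijectivity, there.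
-/

open scoped InnerProductSpace
open Function

section Banach

variable {𝕜 : Type*} [NontriviallyNormedField 𝕜]
  {E F : Type*} [NormedAddCommGroup E] [NormedSpace 𝕜 E] [NormedAddCommGroup F] [NormedSpace 𝕜 F]

namespace ContinuousLinearEquiv

theorem finiteDimensional_ker_of_isCompactOperator_sub [CompleteSpace 𝕜] (L : E ≃L[𝕜] F)
    {T : E →L[𝕜] F} (hK : IsCompactOperator (T - L : E →L[𝕜] F)) :
    FiniteDimensional 𝕜 T.ker := by
  set K : E →L[𝕜] E := -((L.symm : F →L[𝕜] E) ∘L (T - (L : E →L[𝕜] F)))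
  have hfix : ∀ ξ ∈ T.ker, K ξ = ξ := by
    intro ξ (hξ : T ξ = 0)
    simp [K, hξ]
  have hmaps : ∀ ξ ∈ T.ker, K ξ ∈ T.ker := fun ξ hξ => (hfix ξ hξ).symm ▸ hξ
  have hid : (K : E →ₗ[𝕜] E).restrict hmaps = LinearMap.id :=
    LinearMap.ext fun ξ => Subtype.ext (hfix ξ ξ.2)
  have hKc : IsCompactOperator K := (hK.clm_comp (L.symm : F →L[𝕜] E)).neg
  have := hKc.restrict hmaps T.isClosed_ker
  rw [hid] at this
  exact FiniteDimensional.of_isCompactOperator_id this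

theorem bijective_of_injective_of_isCompactOperator_sub [CompleteSpace E] (L : E ≃L[𝕜] F)
    {T : E →L[𝕜] F} (hK : IsCompactOperator (T - L : E →L[𝕜] F)) (hT : Injective T) :
    Bijective T := by
  set K : E →L[𝕜] E := (L.symm : F →L[𝕜] E) ∘L (T - (L : E →L[𝕜] F))
  have hKc : IsCompactOperator K := hK.clm_comp (L.symm : F →L[𝕜] E)
  have hT_eq : ⇑T = L ∘ ⇑(1 + K) := by
    ext ξ
    simp [K]
  have hnot : ¬ Module.End.HasEigenvalue (K : Module.End 𝕜 E) (-1) := by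
    intro h
    obtain ⟨ξ, hξ⟩ := h.exists_hasEigenvector
    refine hξ.2 (hT ?_)
    have := hξ.apply_eq_smul
    rw [T.map_zero, hT_eq]
    simp_all
  have hres := (hKc.hasEigenvalue_or_mem_resolventSet (neg_ne_zero.2 one_ne_zero)).resolve_left
    hnot
  rw [spectrum.mem_resolventSet_iff, ← IsUnit.neg_iff,
    ContinuousLinearMap.isUnit_iff_bijective] at hres
  rw [hT_eq]
  refine L.bijective.comp ?_
  convert hres using 2
  simp [add_comm]

end ContinuousLinearEquiv

namespace ContinuousLinearMap

theorem exists_pos_norm_le_mul_norm_of_bijective [CompleteSpace E] [CompleteSpace F]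
    (T : E →L[𝕜] F) (hT : Bijective T) : ∃ c > 0, ∀ ξ, ‖ξ‖ ≤ c * ‖T ξ‖ := by
  let e := ContinuousLinearEquiv.ofBijective T (LinearMap.ker_eq_bot.2 hT.1)
    (LinearMap.range_eq_top.2 hT.2)
  obtain ⟨c, hc, hbound⟩ := (e.symm : F →L[𝕜] E).bound
  exact ⟨c, hc, fun ξ => by simpa [e] using hbound (T ξ)⟩

theorem norm_le_two_mul_norm_of_norm_sub_le {T₀ T : E →L[𝕜] F} {c : ℝ} (hc : 0 < c)
    (hT₀ : ∀ ξ, ‖ξ‖ ≤ c * ‖T₀ ξ‖) (hT : ‖T - T₀‖ ≤ (2 * c)⁻¹) (ξ : E) :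
    ‖ξ‖ ≤ 2 * c * ‖T ξ‖ := by
  have hsub : ‖T₀ ξ‖ ≤ ‖T ξ‖ + (2 * c)⁻¹ * ‖ξ‖ := calc
    ‖T₀ ξ‖ ≤ ‖T ξ‖ + ‖(T - T₀) ξ‖ := by
      simpa using norm_sub_le (T ξ) ((T - T₀) ξ)
    _ ≤ ‖T ξ‖ + (2 * c)⁻¹ * ‖ξ‖ := by
      gcongr
      exact (T - T₀).le_of_opNorm_le hT ξ
  have : c * ((2 * c)⁻¹ * ‖ξ‖) = ‖ξ‖ / 2 := by field_simp
  nlinarith [hT₀ ξ]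

end ContinuousLinearMap

end Banach

section Hilbert

variable {𝕜 : Type*} [RCLike 𝕜] {E H : Type*} [NormedAddCommGroup E] [NormedSpace 𝕜 E]
  [NormedAddCommGroup H] [InnerProductSpace 𝕜 H]

theorem Submodule.isCompactOperator_starProjection (K : Submodule 𝕜 H) [FiniteDimensional 𝕜 K] :
    IsCompactOperator K.starProjection :=
  (isCompactOperator_of_locallyCompactSpace_dom K.orthogonalProjectionOnto).clm_comp K.subtypeL

theorem injective_add_starProjection_map_ker_comp {S ι : E →L[𝕜] H} (hι : Injective ι)
    (hS : ∀ ξ η, ⟪S ξ, ι η⟫_𝕜 = ⟪ι ξ, S η⟫_𝕜)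
    [(S.ker.map (ι : E →ₗ[𝕜] H)).HasOrthogonalProjection] :
    Injective (S + (S.ker.map (ι : E →ₗ[𝕜] H)).starProjection ∘L ι) := by
  rw [injective_iff_map_eq_zero]
  intro ξ hξ
  replace hξ : S ξ + (S.ker.map (ι : E →ₗ[𝕜] H)).starProjection (ι ξ) = 0 := hξ
  generalize hV : S.ker.map (ι : E →ₗ[𝕜] H) = V at *
  have hperp : ι ξ ∈ Vᗮ := by
    rw [← hV]
    rintro _ ⟨η, hη : S η = 0, rfl⟩
    have hSξ : S ξ = -V.starProjection (ι ξ) := eq_neg_of_add_eq_zero_left hξ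
    calc ⟪ι η, ι ξ⟫_𝕜 = ⟪V.starProjection (ι η), ι ξ⟫_𝕜 := by
          rw [V.starProjection_eq_self_iff.2 (hV ▸ ⟨η, hη, rfl⟩)]
      _ = -⟪S η, ι ξ⟫_𝕜 := by
          rw [V.inner_starProjection_left_eq_right, hS, hSξ, inner_neg_right, neg_neg]
      _ = 0 := by simp [hη]
  have hker : S ξ = 0 := by
    simpa [V.starProjection_apply_eq_zero_iff.2 hperp] using hξ
  have : ⟪ι ξ, ι ξ⟫_𝕜 = 0 := hperp (ι ξ) (hV ▸ ⟨ξ, hker, rfl⟩)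
  exact hι (by simpa using this)

end Hilbert

theorem pS_loc_triv_fam_general
    {X : Type*} [TopologicalSpace X] [LocallyCompactSpace X] [T2Space X]
    {H : Type*} [NormedAddCommGroup H] [InnerProductSpace ℂ H] [CompleteSpace H]
    {W : Type*} [NormedAddCommGroup W] [NormedSpace ℂ W] [CompleteSpace W]
    (ι : W →L[ℂ] H) (hι_inj : Function.Injective ι)
    (hι_cpt : IsCompactOperator ⇑ι)
    (S : X → (W →L[ℂ] H))
    (h_symm : ∀ (x : X) (ξ η : W), (inner ℂ (S x ξ) (ι η) : ℂ) = inner ℂ (ι ξ) (S x η))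
    (Rp : X → (H →L[ℂ] W))
    (hRp1 : ∀ (x : X) (ψ : H), S x (Rp x ψ) + Complex.I • ι (Rp x ψ) = ψ)
    (hRp2 : ∀ (x : X) (ξ : W), Rp x (S x ξ + Complex.I • ι ξ) = ξ)
    (hS_cont : Continuous S) :
    ∀ x₁ : X, ∃ A : H →L[ℂ] H, IsCompactOperator ⇑A ∧ IsSelfAdjoint A ∧
      ∃ O : Set X, IsOpen O ∧ x₁ ∈ O ∧ IsCompact (closure O) ∧
        ∃ c : ℝ, 0 < c ∧ ∀ y ∈ O,
          Function.Bijective (fun ξ : W => S y ξ + A (ι ξ)) ∧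
          ∀ ξ : W, ‖ι ξ‖ ≤ c * ‖S y ξ + A (ι ξ)‖ := by
  intro x₁
  let L (x : X) : W ≃L[ℂ] H := .equivOfInverse (S x + Complex.I • ι) (Rp x) (hRp2 x) (hRp1 x)
  have hcompact (x : X) (B : H →L[ℂ] H) : IsCompactOperator ⇑(S x + B ∘L ι - L x) := by
    have h : ⇑(S x + B ∘L ι - L x) = ⇑(B - Complex.I • (1 : H →L[ℂ] H)) ∘ ι := by
      funext ξ
      simp [L]
    rw [h]
    exact hι_cpt.clm_comp _
  have : FiniteDimensional ℂ (S x₁).ker :=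
    (L x₁).finiteDimensional_ker_of_isCompactOperator_sub (by simpa using hcompact x₁ 0)
  set A := ((S x₁).ker.map (ι : W →ₗ[ℂ] H)).starProjection
  obtain ⟨c, hc, hbound⟩ := (S x₁ + A ∘L ι).exists_pos_norm_le_mul_norm_of_bijective
    ((L x₁).bijective_of_injective_of_isCompactOperator_sub (hcompact x₁ A)
      (injective_add_starProjection_map_ker_comp hι_inj (h_symm x₁)))
  obtain ⟨O, hO, hx₁O, hOU, hOc⟩ := exists_open_between_and_isCompact_closure isCompact_singleton
    (isOpen_lt (hS_cont.sub continuous_const).norm continuous_const)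
    (Set.singleton_subset_iff.2 (show ‖S x₁ - S x₁‖ < (2 * c)⁻¹ by simpa using hc))
  refine ⟨A, Submodule.isCompactOperator_starProjection _, isSelfAdjoint_starProjection _, O, hO,
    hx₁O rfl, hOc, 2 * c * (‖ι‖ + 1), by positivity, fun y hy => ?_⟩
  have hy_bound := (S x₁ + A ∘L ι).norm_le_two_mul_norm_of_norm_sub_le (T := S y + A ∘L ι) hc
    hbound (by rw [add_sub_add_right_eq_sub]; exact (hOU (subset_closure hy)).le)
  refine ⟨(L y).bijective_of_injective_of_isCompactOperator_sub (hcompact y A) ?_, fun ξ => ?_⟩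
  · refine (injective_iff_map_eq_zero _).2 fun ξ hξ => norm_le_zero_iff.1 ?_
    simpa [hξ] using hy_bound ξ
  calc ‖ι ξ‖ ≤ ‖ι‖ * ‖ξ‖ := ι.le_opNorm ξ
    _ ≤ (‖ι‖ + 1) * (2 * c * ‖S y ξ + A (ι ξ)‖) := by
      gcongr
      · linarith
      · exact hy_bound ξ
    _ = 2 * c * (‖ι‖ + 1) * ‖S y ξ + A (ι ξ)‖ := by ring

/-- Lemma 3.5, `pS_loc_triv_fam`.
`H` is a separable Hilbert space and the family `{S(x)}_{x∈X}` satisfies assumptions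
(a1) (`hι_cpt`) and (a2) (`hS_cont`), in the encoding of Statement 2 (abstract domain `W`
with graph norm of `S x₀`, inclusion `ι`, symmetry and resolvent data encoding
self-adjointness).  Then for every `x₁ ∈ X` there exist a compact self-adjoint operator
`A` on `H`, an open neighbourhood `O` of `x₁` with compact closure, and `c > 0` such that
for every `y ∈ O` the operator `S y + A : W → H` is bijective with `‖(S y + A)⁻¹‖ ≤ c`. -/
theorem pS_loc_triv_fam
    {X : Type*} [TopologicalSpace X] [LocallyCompactSpace X] [T2Space X]
    {H : Type*} [NormedAddCommGroup H] [InnerProductSpace ℂ H] [CompleteSpace H]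
    [TopologicalSpace.SeparableSpace H]
    {W : Type*} [NormedAddCommGroup W] [NormedSpace ℂ W] [CompleteSpace W]
    (ι : W →L[ℂ] H) (hι_inj : Function.Injective ι) (hι_dense : DenseRange ι)
    (hι_cpt : IsCompactOperator ⇑ι)
    (S : X → (W →L[ℂ] H))
    (x₀ : X) (h_graph : ∀ ξ : W, ‖ξ‖ ^ 2 = ‖ι ξ‖ ^ 2 + ‖S x₀ ξ‖ ^ 2)
    (h_symm : ∀ (x : X) (ξ η : W), (inner ℂ (S x ξ) (ι η) : ℂ) = inner ℂ (ι ξ) (S x η))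
    (Rp Rm : X → (H →L[ℂ] W))
    (hRp1 : ∀ (x : X) (ψ : H), S x (Rp x ψ) + Complex.I • ι (Rp x ψ) = ψ)
    (hRp2 : ∀ (x : X) (ξ : W), Rp x (S x ξ + Complex.I • ι ξ) = ξ)
    (hRm1 : ∀ (x : X) (ψ : H), S x (Rm x ψ) - Complex.I • ι (Rm x ψ) = ψ)
    (hRm2 : ∀ (x : X) (ξ : W), Rm x (S x ξ - Complex.I • ι ξ) = ξ)
    (hS_cont : Continuous S) :
    ∀ x₁ : X, ∃ A : H →L[ℂ] H, IsCompactOperator ⇑A ∧ IsSelfAdjoint A ∧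
      ∃ O : Set X, IsOpen O ∧ x₁ ∈ O ∧ IsCompact (closure O) ∧
        ∃ c : ℝ, 0 < c ∧ ∀ y ∈ O,
          Function.Bijective (fun ξ : W => S y ξ + A (ι ξ)) ∧
          ∀ ξ : W, ‖ι ξ‖ ≤ c * ‖S y ξ + A (ι ξ)‖ :=
  pS_loc_triv_fam_general ι hι_inj hι_cpt S h_symm Rp hRp1 hRp2 hS_cont
end

section
/- Let M be a connected topological space (in the paper, a connected Riemannian manifold) and let {S(x)}_{x∈M} be a family of self-adjoint operators on a complex Hilbert space H, all with the same dense domain W, such that x ↦ S(x) is norm-continuous from M into the bounded operators (W, ‖·‖_W) → H, where ‖·‖_W is the graph norm of S(x₀) for a fixed x₀ ∈ M. Suppose there are a compact set K ⊆ M and c > 0 such that S(x) : W → H is bijective with ‖S(x)⁻¹‖ ≤ c for all x ∈ M∖K, and suppose there is a finite open cover {V_j}_{j=1}^l of M∖K together with points x_j in the closure of V_j at which S(x_j) : W → H is bijective with bounded inverse, and numbers a_j < 1, such that ‖(S(x) − S(x_j))ξ‖ ≤ a_j‖S(x_j)ξ‖ for all x ∈ V_j and ξ ∈ W. Then the graph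 norms of the operators S(x) are uniformly equivalent: there exist constants C₁, C₂ > 0 such that C₁‖ξ‖_W ≤ (‖ξ‖² + ‖S(x)ξ‖²)^{1/2} ≤ C₂‖ξ‖_W for all x ∈ M and ξ ∈ W. [Hilbert-space case of Lemma 3.7 (uegn), under Standing Assumptions (A1)–(A4).] -/
/-!
Put `T x = S x + i ι`. Symmetry of `S x` gives `‖T x ξ‖² = ‖ι ξ‖² + ‖S x ξ‖²`, so `T x` is
injective, and self-adjointness makes it surjective; hence the graph norm of `S x` is `‖T x ξ‖`
and the claim amounts to uniform bounds on `‖(T x)⁻¹‖` and `‖S x‖`. Both are continuous in `x`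
(inversion is continuous on invertible operators), hence bounded on the compact `K`. On `V j`
the closeness to the invertible `S (xj j)` gives `‖S x‖ ≤ 2 ‖S (xj j)‖` and
`‖ξ‖ ≤ ‖S (xj j)⁻¹‖ (1 - a j)⁻¹ ‖S x ξ‖ ≤ ‖S (xj j)⁻¹‖ (1 - a j)⁻¹ ‖T x ξ‖`.
-/

theorem Complex.norm_add_I_smul_sq {H : Type*} [NormedAddCommGroup H] [InnerProductSpace ℂ H]
    {u v : H} (h : (inner ℂ u v).im = 0) : ‖u + Complex.I • v‖ ^ 2 = ‖u‖ ^ 2 + ‖v‖ ^ 2 := by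
  rw [norm_add_sq (𝕜 := ℂ), inner_smul_right, norm_smul, Complex.norm_I]
  simp [h]

theorem IsCompact.exists_forall_le_of_cover {X ι : Type*} [TopologicalSpace X] [Finite ι]
    {K : Set X} (hK : IsCompact K) {f : X → ℝ} (hf : Continuous f) {V : ι → Set X}
    (hV : ∀ x ∉ K, ∃ j, x ∈ V j) {g : ι → ℝ} (hg : ∀ j, ∀ x ∈ V j, f x ≤ g j) :
    ∃ C, ∀ x, f x ≤ C := by
  obtain ⟨C₁, hC₁⟩ := (hK.image hf).bddAbove
  obtain ⟨C₂, hC₂⟩ := (Set.finite_range g).bddAbove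
  refine ⟨max C₁ C₂, fun x => ?_⟩
  by_cases hx : x ∈ K
  · exact le_max_of_le_left (hC₁ (Set.mem_image_of_mem f hx))
  · obtain ⟨j, hj⟩ := hV x hx
    exact le_max_of_le_right ((hg j x hj).trans (hC₂ ⟨j, rfl⟩))

namespace ContinuousLinearMap

variable {𝕜 E F : Type*} [NontriviallyNormedField 𝕜] [NormedAddCommGroup E] [NormedSpace 𝕜 E]
  [NormedAddCommGroup F] [NormedSpace 𝕜 F]

theorem isInvertible_of_bijective [CompleteSpace E] [CompleteSpace F] {f : E →L[𝕜] F}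
    (hf : Function.Bijective f) : f.IsInvertible :=
  ⟨.ofBijective f (LinearMap.ker_eq_bot.mpr hf.1) (LinearMap.range_eq_top.mpr hf.2), rfl⟩

theorem IsInvertible.norm_le_norm_inverse_mul {f : E →L[𝕜] F} (hf : f.IsInvertible) (x : E) :
    ‖x‖ ≤ ‖f.inverse‖ * ‖f x‖ := by
  simpa only [hf.inverse_apply_self] using f.inverse.le_opNorm (f x)

theorem IsInvertible.norm_inverse_le {f : E →L[𝕜] F} (hf : f.IsInvertible) {C : ℝ} (hC : 0 ≤ C)
    (h : ∀ x, ‖x‖ ≤ C * ‖f x‖) : ‖f.inverse‖ ≤ C :=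
  f.inverse.opNorm_le_bound hC fun y => by simpa only [hf.self_apply_inverse] using h (f.inverse y)

theorem _root_.Continuous.norm_inverse [CompleteSpace E] {X : Type*} [TopologicalSpace X]
    {T : X → E →L[𝕜] F} (hT : Continuous T) (hinv : ∀ x, (T x).IsInvertible) :
    Continuous fun x => ‖(T x).inverse‖ :=
  continuous_iff_continuousAt.mpr fun x =>
    (((hinv x).contDiffAt_map_inverse (n := 0)).continuousAt.comp hT.continuousAt).norm

variable {A B : E →L[𝕜] F} {a : ℝ}

theorem opNorm_le_two_mul_of_norm_sub_le (ha : a ≤ 1) (h : ∀ x, ‖A x - B x‖ ≤ a * ‖B x‖) :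
    ‖A‖ ≤ 2 * ‖B‖ :=
  A.opNorm_le_bound (by positivity) fun x =>
    calc ‖A x‖ ≤ ‖B x‖ + ‖A x - B x‖ := norm_le_insert' _ _
      _ ≤ 2 * ‖B x‖ := by nlinarith [h x, norm_nonneg (B x)]
      _ ≤ 2 * ‖B‖ * ‖x‖ := by rw [mul_assoc]; gcongr; exact B.le_opNorm x

theorem norm_apply_le_inv_one_sub_mul_of_norm_sub_le (ha : a < 1)
    (h : ∀ x, ‖A x - B x‖ ≤ a * ‖B x‖) (x : E) : ‖B x‖ ≤ (1 - a)⁻¹ * ‖A x‖ := by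
  rw [le_inv_mul_iff₀ (sub_pos.mpr ha)]
  linarith [h x, norm_le_insert (A x) (B x)]

theorem IsInvertible.norm_inverse_le_of_norm_sub_le {T : E →L[𝕜] F} (hT : T.IsInvertible)
    (hB : B.IsInvertible) (ha : a < 1) (h : ∀ x, ‖A x - B x‖ ≤ a * ‖B x‖)
    (hAT : ∀ x, ‖A x‖ ≤ ‖T x‖) : ‖T.inverse‖ ≤ ‖B.inverse‖ * (1 - a)⁻¹ := by
  have hinv_nonneg : 0 ≤ (1 - a)⁻¹ := inv_nonneg.mpr (sub_nonneg.mpr ha.le)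
  refine hT.norm_inverse_le (mul_nonneg (norm_nonneg _) hinv_nonneg) fun x => ?_
  calc ‖x‖ ≤ ‖B.inverse‖ * ‖B x‖ := hB.norm_le_norm_inverse_mul x
    _ ≤ ‖B.inverse‖ * ((1 - a)⁻¹ * ‖T x‖) := by
      gcongr
      exact (norm_apply_le_inv_one_sub_mul_of_norm_sub_le ha h x).trans
        (mul_le_mul_of_nonneg_left (hAT x) hinv_nonneg)
    _ = ‖B.inverse‖ * (1 - a)⁻¹ * ‖T x‖ := (mul_assoc _ _ _).symm

end ContinuousLinearMap

section GraphNorm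

open ContinuousLinearMap

variable {H W : Type*} [NormedAddCommGroup H] [InnerProductSpace ℂ H] [NormedAddCommGroup W]
  [NormedSpace ℂ W] {ι S : W →L[ℂ] H}

theorem norm_add_I_smul_apply_sq (hS : ∀ ξ η, inner ℂ (S ξ) (ι η) = inner ℂ (ι ξ) (S η))
    (ξ : W) : ‖(S + Complex.I • ι) ξ‖ ^ 2 = ‖ι ξ‖ ^ 2 + ‖S ξ‖ ^ 2 := by
  have hreal : (inner ℂ (S ξ) (ι ξ)).im = 0 := by
    rw [← Complex.conj_eq_iff_im, inner_conj_symm, hS]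
  rw [add_apply, smul_apply, Complex.norm_add_I_smul_sq hreal, add_comm]

theorem norm_apply_le_norm_add_I_smul_apply
    (hS : ∀ ξ η, inner ℂ (S ξ) (ι η) = inner ℂ (ι ξ) (S η)) (ξ : W) :
    ‖S ξ‖ ≤ ‖(S + Complex.I • ι) ξ‖ := by
  rw [← pow_le_pow_iff_left₀ (norm_nonneg _) (norm_nonneg _) two_ne_zero,
    norm_add_I_smul_apply_sq hS]
  exact le_add_of_nonneg_left (sq_nonneg _)

theorem isInvertible_add_I_smul [CompleteSpace H] [CompleteSpace W] (hι : Function.Injective ι)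
    (hS : ∀ ξ η, inner ℂ (S ξ) (ι η) = inner ℂ (ι ξ) (S η))
    (hsurj : ∀ ψ, ∃ ξ, S ξ + Complex.I • ι ξ = ψ) : (S + Complex.I • ι).IsInvertible := by
  refine isInvertible_of_bijective ⟨(injective_iff_map_eq_zero _).mpr fun ξ hξ => hι ?_, hsurj⟩
  have hsq := norm_add_I_smul_apply_sq hS ξ
  rw [hξ, norm_zero] at hsq
  rw [map_zero, ← norm_eq_zero]
  nlinarith [sq_nonneg ‖ι ξ‖, sq_nonneg ‖S ξ‖, norm_nonneg (ι ξ)]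

end GraphNorm

theorem uegn_general
    {M : Type*} [TopologicalSpace M]
    {H : Type*} [NormedAddCommGroup H] [InnerProductSpace ℂ H] [CompleteSpace H]
    {W : Type*} [NormedAddCommGroup W] [NormedSpace ℂ W] [CompleteSpace W]
    (ι : W →L[ℂ] H) (hι_inj : Function.Injective ι)
    (S : M → (W →L[ℂ] H))
    (x₀ : M) (h_graph : ∀ ξ : W, ‖ξ‖ ^ 2 = ‖ι ξ‖ ^ 2 + ‖S x₀ ξ‖ ^ 2)
    (h_symm : ∀ (x : M) (ξ η : W), (inner ℂ (S x ξ) (ι η) : ℂ) = inner ℂ (ι ξ) (S x η))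
    (h_sa : ∀ (x : M) (ψ : H),
      (∃ ξ : W, S x ξ + Complex.I • ι ξ = ψ) ∧ (∃ ξ : W, S x ξ - Complex.I • ι ξ = ψ))
    (hS_cont : Continuous S)
    (K : Set M) (hK : IsCompact K)
    (l : ℕ) (V : Fin l → Set M)
    (h_cover : ∀ x : M, x ∉ K → ∃ j, x ∈ V j)
    (xj : Fin l → M)
    (hxj_bij : ∀ j, Function.Bijective ⇑(S (xj j)))
    (a : Fin l → ℝ) (ha_lt : ∀ j, a j < 1)
    (h_small : ∀ j, ∀ x ∈ V j, ∀ ξ : W,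
      ‖S x ξ - S (xj j) ξ‖ ≤ a j * ‖S (xj j) ξ‖) :
    ∃ C₁ : ℝ, 0 < C₁ ∧ ∃ C₂ : ℝ, 0 < C₂ ∧ ∀ (x : M) (ξ : W),
      C₁ * ‖ξ‖ ≤ Real.sqrt (‖ι ξ‖ ^ 2 + ‖S x ξ‖ ^ 2) ∧
      Real.sqrt (‖ι ξ‖ ^ 2 + ‖S x ξ‖ ^ 2) ≤ C₂ * ‖ξ‖ := by
  set T : M → W →L[ℂ] H := fun x => S x + Complex.I • ι
  have hT_inv (x : M) : (T x).IsInvertible :=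
    isInvertible_add_I_smul hι_inj (h_symm x) fun ψ => (h_sa x ψ).1
  have hT_cont : Continuous T := hS_cont.add continuous_const
  obtain ⟨D, hD⟩ := hK.exists_forall_le_of_cover (hT_cont.norm_inverse hT_inv) h_cover
    fun j x hx => (hT_inv x).norm_inverse_le_of_norm_sub_le
      (ContinuousLinearMap.isInvertible_of_bijective (hxj_bij j)) (ha_lt j) (h_small j x hx)
      (norm_apply_le_norm_add_I_smul_apply (h_symm x))
  obtain ⟨A, hA⟩ := hK.exists_forall_le_of_cover hS_cont.norm h_cover fun j x hx =>
    ContinuousLinearMap.opNorm_le_two_mul_of_norm_sub_le (ha_lt j).le (h_small j x hx)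
  have hι_le (ξ : W) : ‖ι ξ‖ ≤ ‖ξ‖ := by
    rw [← pow_le_pow_iff_left₀ (norm_nonneg _) (norm_nonneg _) two_ne_zero, h_graph]
    exact le_add_of_nonneg_right (sq_nonneg _)
  have hD_nonneg : 0 ≤ D := (norm_nonneg _).trans (hD x₀)
  have hA_nonneg : 0 ≤ A := (norm_nonneg _).trans (hA x₀)
  refine ⟨(D + 1)⁻¹, by positivity, A + 1, by positivity, fun x ξ => ?_⟩
  rw [← norm_add_I_smul_apply_sq (h_symm x), Real.sqrt_sq (norm_nonneg _),
    inv_mul_le_iff₀ (by positivity)]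
  constructor
  · calc ‖ξ‖ ≤ ‖(T x).inverse‖ * ‖T x ξ‖ := (hT_inv x).norm_le_norm_inverse_mul ξ
      _ ≤ (D + 1) * ‖T x ξ‖ := by gcongr; linarith [hD x]
  · calc ‖T x ξ‖ ≤ ‖S x ξ‖ + ‖ι ξ‖ := by
          simpa only [T, add_apply, smul_apply, norm_smul, Complex.norm_I, one_mul]
            using norm_add_le (S x ξ) (Complex.I • ι ξ)
      _ ≤ A * ‖ξ‖ + ‖ξ‖ := add_le_add ((S x).le_of_opNorm_le (hA x) ξ) (hι_le ξ)
      _ = (A + 1) * ‖ξ‖ := by ring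

/-- Hilbert-space case of Lemma 3.7, `uegn`, under the Standing
Assumptions (A1)–(A4).
`M` is a connected topological space, and `{S(x)}_{x∈M}` is a norm-continuous family of
self-adjoint operators on `H` with common dense domain `W` (encoded as in Statement 2:
abstract complete normed space `W` with injective dense inclusion `ι : W →L[ℂ] H`, the
norm of `W` being the graph norm of `S x₀`; self-adjointness = symmetry plus surjectivity
of `S x ± i`).  Assume (A3): `S x` is bijective with `‖S(x)⁻¹‖ ≤ c` for `x ∉ K` (`K`
compact), and (A4): a finite open cover `{V j}` of `M∖K` with points `xj j ∈ closure (V j)`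
at which `S (xj j)` is bijective, and constants `0 < a j < 1` with
`‖(S x − S (xj j))ξ‖ ≤ a j · ‖S (xj j) ξ‖` for `x ∈ V j`.
Then the graph norms of the `S x` are uniformly equivalent. -/
theorem uegn
    {M : Type*} [TopologicalSpace M] [ConnectedSpace M]
    {H : Type*} [NormedAddCommGroup H] [InnerProductSpace ℂ H] [CompleteSpace H]
    {W : Type*} [NormedAddCommGroup W] [NormedSpace ℂ W] [CompleteSpace W]
    (ι : W →L[ℂ] H) (hι_inj : Function.Injective ι) (hι_dense : DenseRange ι)
    (S : M → (W →L[ℂ] H))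
    (x₀ : M) (h_graph : ∀ ξ : W, ‖ξ‖ ^ 2 = ‖ι ξ‖ ^ 2 + ‖S x₀ ξ‖ ^ 2)
    (h_symm : ∀ (x : M) (ξ η : W), (inner ℂ (S x ξ) (ι η) : ℂ) = inner ℂ (ι ξ) (S x η))
    (h_sa : ∀ (x : M) (ψ : H),
      (∃ ξ : W, S x ξ + Complex.I • ι ξ = ψ) ∧ (∃ ξ : W, S x ξ - Complex.I • ι ξ = ψ))
    (hS_cont : Continuous S)
    (K : Set M) (hK : IsCompact K)
    (c : ℝ) (hc : 0 < c)
    (h_inv : ∀ x ∉ K, Function.Bijective ⇑(S x) ∧ ∀ ξ : W, ‖ι ξ‖ ≤ c * ‖S x ξ‖)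
    (l : ℕ) (V : Fin l → Set M) (hV_open : ∀ j, IsOpen (V j))
    (h_cover : ∀ x : M, x ∉ K → ∃ j, x ∈ V j)
    (xj : Fin l → M) (hxj_mem : ∀ j, xj j ∈ closure (V j))
    (hxj_bij : ∀ j, Function.Bijective ⇑(S (xj j)))
    (a : Fin l → ℝ) (ha_pos : ∀ j, 0 < a j) (ha_lt : ∀ j, a j < 1)
    (h_small : ∀ j, ∀ x ∈ V j, ∀ ξ : W,
      ‖S x ξ - S (xj j) ξ‖ ≤ a j * ‖S (xj j) ξ‖) :
    ∃ C₁ : ℝ, 0 < C₁ ∧ ∃ C₂ : ℝ, 0 < C₂ ∧ ∀ (x : M) (ξ : W),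
      C₁ * ‖ξ‖ ≤ Real.sqrt (‖ι ξ‖ ^ 2 + ‖S x ξ‖ ^ 2) ∧
      Real.sqrt (‖ι ξ‖ ^ 2 + ‖S x ξ‖ ^ 2) ≤ C₂ * ‖ξ‖ :=
  uegn_general ι hι_inj S x₀ h_graph h_symm h_sa hS_cont K hK l V h_cover xj hxj_bij a ha_lt h_small
end

section
/- Let M be a metric space, U ⊆ M an open set with closure Ū, and x ∈ U. Let H be a complex Hilbert space, W ⊆ H a dense linear subspace, and {S(y)}_{y∈Ū} a family of self-adjoint operators on H, all with domain W, such that y ↦ S(y) is norm-continuous from Ū into the bounded operators from (W, graph norm of S(x)) to H. Suppose S(x) : W → H is bijective with bounded inverse S(x)⁻¹, let a ∈ [0,1), and suppose ‖(S(y) − S(x))ξ‖ ≤ a‖S(x)ξ‖ for all y ∈ Ū and all ξ ∈ W. Then there exists a family {S^U(y)}_{y∈M} of self-adjoint operators on H, all with domain W, such that y ↦ S^U(y) is norm-continuous from M into the bounded operators (W, graph norm of S(x)) → H, S^U(y) = S(y) for all y ∈ Ū, ‖(S^U(y) − S(x))ξ‖ ≤ a‖S(x)ξ‖ for all y ∈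 M and ξ ∈ W, and moreover every S^U(y) : W → H is bijective with ‖S^U(y)⁻¹‖ ≤ (1−a)⁻¹‖S(x)⁻¹‖. [Hilbert-space case of Lemma 3.9(2) (extension).] -/
/-!
Outside the closed set `Ū` the family is extended as in Dugundji's theorem: over a partition of
unity on the complement, `S^U(y)` is a convex combination of values `S(q)` at points `q ∈ Ū` whose
distance to any `b ∈ Ū` is at most `6 d(y, b)`; this gives continuity on the boundary of `Ū`.
Symmetry and the relative bound `‖(T - S(x))ξ‖ ≤ a‖S(x)ξ‖` are convex conditions on `T`, so they
survive the convex combinations. For symmetric `S(x)` one has `‖(S(x) ± i)ξ‖ ≥ ‖S(x)ξ‖`, so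
`S(x) ± i` is bijective and `S^U(y) ± i` is a perturbation of it of relative size `a < 1`; a Neumann
series then shows that `S^U(y) ± i` and `S^U(y)` are bijective, which gives self-adjointness and the
inverse bound.
-/

open Function Set Metric

section Dugundji

variable {M E : Type*} [MetricSpace M] [NormedAddCommGroup E] [NormedSpace ℝ E] {A : Set M}

theorem dist_le_six_mul_dist_of_dist_lt_infDist {z p b a : M} (hb : dist p b < 2 * infDist p A)
    (hz : dist z p < infDist p A / 2) (ha : a ∈ A) : dist b a ≤ 6 * dist z a := by
  have hp : infDist p A ≤ 2 * dist z a := by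
    have h₁ : infDist p A ≤ infDist z A + dist p z := infDist_le_infDist_add_dist
    have h₂ : infDist z A ≤ dist z a := infDist_le_dist_of_mem ha
    linarith [dist_comm p z]
  calc dist b a ≤ dist b p + dist p z + dist z a := dist_triangle4 _ _ _ _
    _ ≤ 6 * dist z a := by linarith [dist_comm b p, dist_comm p z]

theorem exists_continuous_compl_mem_convexHull (hA : IsClosed A) (hne : A.Nonempty) (f : M → E) :
    ∃ G : (Aᶜ : Set M) → E, Continuous G ∧ ∀ (z : (Aᶜ : Set M)), ∀ a ∈ A,
      G z ∈ convexHull ℝ (f '' (A ∩ closedBall a (6 * dist (z : M) a))) := by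
  have hpos (z : (Aᶜ : Set M)) : 0 < infDist (z : M) A := (hA.notMem_iff_infDist_pos hne).1 z.2
  choose q hqA hq using fun z : (Aᶜ : Set M) ↦
    (infDist_lt_iff hne).1 (by linarith [hpos z] : infDist (z : M) A < 2 * infDist (z : M) A)
  let V (p : (Aᶜ : Set M)) : Set (Aᶜ : Set M) := Subtype.val ⁻¹' ball (p : M) (infDist (p : M) A / 2)
  obtain ⟨ρ, hρ⟩ := PartitionOfUnity.exists_isSubordinate isClosed_univ V
    (fun p ↦ isOpen_ball.preimage continuous_subtype_val)
    fun z _ ↦ mem_iUnion.2 ⟨z, by simpa [V] using half_pos (hpos z)⟩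
  refine ⟨fun z ↦ ∑ᶠ p, ρ p z • f (q p), ρ.continuous_finsum_smul fun _ _ _ ↦ continuousAt_const,
    fun z a ha ↦ ρ.finsum_smul_mem_convex (g := fun p _ ↦ f (q p)) (mem_univ z) (fun p hp ↦ ?_)
      (convex_convexHull ℝ _)⟩
  refine subset_convexHull ℝ _ ⟨q p, ⟨hqA p, mem_closedBall.2 ?_⟩, rfl⟩
  exact dist_le_six_mul_dist_of_dist_lt_infDist (hq p) (hρ p (subset_closure hp)) ha

theorem exists_continuous_extension_mem_convexHull (hA : IsClosed A) (hne : A.Nonempty)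
    {f : M → E} (hf : ContinuousOn f A) :
    ∃ F : M → E, Continuous F ∧ EqOn F f A ∧ ∀ y, F y ∈ convexHull ℝ (f '' A) := by
  classical
  obtain ⟨G, hG, hGmem⟩ := exists_continuous_compl_mem_convexHull hA hne f
  let F (y : M) : E := if hy : y ∈ A then f y else G ⟨y, hy⟩
  have hFA : EqOn F f A := fun y hy ↦ dif_pos hy
  have hF (y : M) : ∀ a ∈ A, F y ∈ convexHull ℝ (f '' (A ∩ closedBall a (6 * dist y a))) := by
    intro a ha
    by_cases hy : y ∈ A
    · refine subset_convexHull ℝ _ ⟨y, ⟨hy, mem_closedBall.2 ?_⟩, (hFA hy).symm⟩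
      linarith [dist_nonneg (x := y) (y := a)]
    · simpa only [F, dif_neg hy] using hGmem ⟨y, hy⟩ a ha
  refine ⟨F, continuous_iff_continuousAt.2 fun y ↦ ?_, hFA,
    fun y ↦ convexHull_mono (image_mono inter_subset_left) (hF y _ hne.some_mem)⟩
  by_cases hy : y ∈ A
  · refine tendsto_nhds_nhds.2 fun ε hε ↦ ?_
    obtain ⟨δ, hδ, hfδ⟩ := continuousWithinAt_iff.1 (hf y hy) (ε / 2) (half_pos hε)
    refine ⟨δ / 6, by positivity, fun {y'} hy' ↦ ?_⟩
    have hball : f '' (A ∩ closedBall y (6 * dist y' y)) ⊆ closedBall (F y) (ε / 2) := by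
      rintro _ ⟨b, ⟨hbA, hb⟩, rfl⟩
      rw [mem_closedBall, hFA hy]
      exact (hfδ hbA (by rw [mem_closedBall] at hb; linarith)).le
    exact (convexHull_min hball (convex_closedBall _ _) (hF y' y hy)).trans_lt (half_lt_self hε)
  · have hGF : ContinuousOn F Aᶜ := by
      rw [continuousOn_iff_continuous_domRestrict]
      convert hG using 1
      funext z
      exact dif_neg z.2
    exact hGF.continuousAt (hA.isOpen_compl.mem_nhds hy)

end Dugundji

theorem LinearMap.bijective_of_norm_sub_le {𝕜 V F : Type*} [NontriviallyNormedField 𝕜]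
    [AddCommGroup V] [Module 𝕜 V] [NormedAddCommGroup F] [NormedSpace 𝕜 F] [CompleteSpace F]
    {E T : V →ₗ[𝕜] F} (hE : Bijective E) {a : ℝ} (ha0 : 0 ≤ a) (ha1 : a < 1)
    (h : ∀ v, ‖T v - E v‖ ≤ a * ‖E v‖) : Bijective T := by
  let e := LinearEquiv.ofBijective E hE
  let u : F →L[𝕜] F := ((T - E) ∘ₗ e.symm.toLinearMap).mkContinuous a fun ψ ↦ by
    simpa [e] using h (e.symm ψ)
  have hu : ‖-u‖ < 1 := by
    rw [norm_neg]
    exact (LinearMap.mkContinuous_norm_le _ ha0 _).trans_lt ha1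
  have hT : ⇑T = ⇑(1 - -u) ∘ ⇑E := by
    ext v
    simp [u, e]
  rw [hT]
  exact (ContinuousLinearMap.isUnit_iff_bijective.1 (isUnit_one_sub_of_norm_lt_one hu)).comp hE

theorem norm_le_inv_one_sub_mul_norm {F : Type*} [SeminormedAddCommGroup F] {u w : F} {a : ℝ}
    (ha1 : a < 1) (h : ‖w - u‖ ≤ a * ‖u‖) : ‖u‖ ≤ (1 - a)⁻¹ * ‖w‖ := by
  rw [le_inv_mul_iff₀ (sub_pos.2 ha1)]
  linarith [norm_sub_norm_le u w, norm_sub_rev u w]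

theorem LinearMap.norm_le_inv_one_sub_mul_of_norm_sub_le {R V F G : Type*} [Semiring R]
    [AddCommGroup V] [Module R V] [NormedAddCommGroup F] [Module R F] [SeminormedAddCommGroup G]
    [Module R G] {S₀ T : V →ₗ[R] F} (ι : V →ₗ[R] G) (hS₀ : Injective S₀) {c : ℝ}
    (hc : ∀ v, ‖ι v‖ ≤ c * ‖S₀ v‖) {a : ℝ} (ha1 : a < 1) (h : ∀ v, ‖T v - S₀ v‖ ≤ a * ‖S₀ v‖)
    (v : V) : ‖ι v‖ ≤ (1 - a)⁻¹ * c * ‖T v‖ := by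
  rcases eq_or_ne v 0 with rfl | hv
  · simp
  have hc0 : 0 ≤ c := nonneg_of_mul_nonneg_left ((norm_nonneg _).trans (hc v))
    (norm_pos_iff.2 ((map_ne_zero_iff _ hS₀).2 hv))
  calc ‖ι v‖ ≤ c * ‖S₀ v‖ := hc v
    _ ≤ c * ((1 - a)⁻¹ * ‖T v‖) := by gcongr; exact norm_le_inv_one_sub_mul_norm ha1 (h v)
    _ = (1 - a)⁻¹ * c * ‖T v‖ := by ring

theorem norm_le_norm_add_smul_of_im_inner_eq_zero {H : Type*} [NormedAddCommGroup H]
    [InnerProductSpace ℂ H] {u v : H} (huv : (inner ℂ u v).im = 0) {μ : ℂ} (hμ : μ.re = 0) :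
    ‖u‖ ≤ ‖u + μ • v‖ := by
  have h : ‖u + μ • v‖ ^ 2 = ‖u‖ ^ 2 + ‖μ • v‖ ^ 2 := by
    rw [norm_add_sq (𝕜 := ℂ), inner_smul_right]
    simp [hμ, huv]
  exact (sq_le_sq₀ (norm_nonneg _) (norm_nonneg _)).1 (h ▸ le_add_of_nonneg_right (sq_nonneg _))

theorem LinearMap.surjective_add_smul_of_norm_sub_le {W H : Type*} [AddCommGroup W] [Module ℂ W]
    [NormedAddCommGroup H] [InnerProductSpace ℂ H] [CompleteSpace H] {S₀ T ι : W →ₗ[ℂ] H}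
    (hreal : ∀ ξ, (inner ℂ (S₀ ξ) (ι ξ)).im = 0) (hS₀ : Injective S₀) {μ : ℂ} (hμ : μ.re = 0)
    (hsurj : Surjective (S₀ + μ • ι)) {a : ℝ} (ha0 : 0 ≤ a) (ha1 : a < 1)
    (h : ∀ ξ, ‖T ξ - S₀ ξ‖ ≤ a * ‖S₀ ξ‖) : Surjective (T + μ • ι) := by
  have hle (ξ : W) : ‖S₀ ξ‖ ≤ ‖(S₀ + μ • ι) ξ‖ :=
    norm_le_norm_add_smul_of_im_inner_eq_zero (hreal ξ) hμ
  have hinj : Injective (S₀ + μ • ι) := (injective_iff_map_eq_zero _).2 fun ξ hξ ↦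
    (map_eq_zero_iff _ hS₀).1 (norm_le_zero_iff.1 (by simpa only [hξ, norm_zero] using hle ξ))
  refine (bijective_of_norm_sub_le ⟨hinj, hsurj⟩ ha0 ha1 fun ξ ↦ ?_).2
  calc ‖(T + μ • ι) ξ - (S₀ + μ • ι) ξ‖ = ‖T ξ - S₀ ξ‖ := by simp
    _ ≤ a * ‖(S₀ + μ • ι) ξ‖ := (h ξ).trans (by gcongr; exact hle ξ)

section SelfAdjointFamily

variable {W H : Type*} [NormedAddCommGroup W] [NormedSpace ℂ W] [NormedAddCommGroup H]
  [InnerProductSpace ℂ H]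

theorem convex_setOf_inner_apply_eq (ι : W →L[ℂ] H) :
    Convex ℝ {T : W →L[ℂ] H | ∀ ξ η, inner ℂ (T ξ) (ι η) = inner ℂ (ι ξ) (T η)} := by
  intro T hT T' hT' s t _ _ _ ξ η
  simp only [add_apply, smul_apply,
    RCLike.real_smul_eq_coe_smul (K := ℂ), inner_add_left, inner_add_right, inner_smul_real_left,
    inner_smul_real_right, hT ξ η, hT' ξ η]

theorem convex_setOf_norm_sub_apply_le (S₀ : W →L[ℂ] H) (r : W → ℝ) :
    Convex ℝ {T : W →L[ℂ] H | ∀ ξ, ‖T ξ - S₀ ξ‖ ≤ r ξ} := by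
  have h : {T : W →L[ℂ] H | ∀ ξ, ‖T ξ - S₀ ξ‖ ≤ r ξ} =
      ⋂ ξ, (fun T : W →L[ℂ] H ↦ T ξ) ⁻¹' closedBall (S₀ ξ) (r ξ) := by
    ext T
    simp [dist_eq_norm]
  rw [h]
  exact convex_iInter fun ξ ↦ (convex_closedBall _ _).is_linear_preimage
    ⟨fun _ _ ↦ rfl, fun _ _ ↦ rfl⟩

end SelfAdjointFamily

theorem extension_two_general
    {M : Type*} [MetricSpace M]
    {H : Type*} [NormedAddCommGroup H] [InnerProductSpace ℂ H] [CompleteSpace H]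
    {W : Type*} [NormedAddCommGroup W] [NormedSpace ℂ W]
    (ι : W →L[ℂ] H)
    (U : Set M) (x : M) (hx : x ∈ U)
    (S : M → (W →L[ℂ] H))
    (hS_cont : ContinuousOn S (closure U))
    (h_symm : ∀ y ∈ closure U, ∀ (ξ η : W),
      (inner ℂ (S y ξ) (ι η) : ℂ) = inner ℂ (ι ξ) (S y η))
    (h_sa : ∀ y ∈ closure U, ∀ ψ : H,
      (∃ ξ : W, S y ξ + Complex.I • ι ξ = ψ) ∧ (∃ ξ : W, S y ξ - Complex.I • ι ξ = ψ))
    (hx_bij : Function.Bijective ⇑(S x))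
    (c : ℝ) (hc : ∀ ξ : W, ‖ι ξ‖ ≤ c * ‖S x ξ‖)
    (a : ℝ) (ha0 : 0 ≤ a) (ha1 : a < 1)
    (h_small : ∀ y ∈ closure U, ∀ ξ : W, ‖S y ξ - S x ξ‖ ≤ a * ‖S x ξ‖) :
    ∃ SU : M → (W →L[ℂ] H),
      Continuous SU ∧
      (∀ y ∈ closure U, SU y = S y) ∧
      (∀ (y : M) (ξ η : W), (inner ℂ (SU y ξ) (ι η) : ℂ) = inner ℂ (ι ξ) (SU y η)) ∧
      (∀ (y : M) (ψ : H),
        (∃ ξ : W, SU y ξ + Complex.I • ι ξ = ψ) ∧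
        (∃ ξ : W, SU y ξ - Complex.I • ι ξ = ψ)) ∧
      (∀ (y : M) (ξ : W), ‖SU y ξ - S x ξ‖ ≤ a * ‖S x ξ‖) ∧
      (∀ y : M, Function.Bijective ⇑(SU y) ∧
        ∀ ξ : W, ‖ι ξ‖ ≤ (1 - a)⁻¹ * c * ‖SU y ξ‖) := by
  have hxU : x ∈ closure U := subset_closure hx
  obtain ⟨SU, hSU_cont, hSU_eq, hSU_mem⟩ :=
    exists_continuous_extension_mem_convexHull isClosed_closure ⟨x, hxU⟩ hS_cont
  have hSU (y : M) : SU y ∈ {T : W →L[ℂ] H | ∀ ξ η, inner ℂ (T ξ) (ι η) = inner ℂ (ι ξ) (T η)} ∩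
      {T | ∀ ξ, ‖T ξ - S x ξ‖ ≤ a * ‖S x ξ‖} := by
    refine convexHull_min ?_ ((convex_setOf_inner_apply_eq ι).inter
      (convex_setOf_norm_sub_apply_le _ _)) (hSU_mem y)
    rintro _ ⟨z, hz, rfl⟩
    exact ⟨h_symm z hz, h_small z hz⟩
  have hreal (ξ : W) : (inner ℂ (S x ξ) (ι ξ)).im = 0 :=
    Complex.conj_eq_iff_im.1 (by rw [inner_conj_symm]; exact (h_symm x hxU ξ ξ).symm)
  have hsurj (μ : ℂ) (hμ : μ.re = 0) (h : ∀ ψ, ∃ ξ, S x ξ + μ • ι ξ = ψ) (y : M) (ψ : H) :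
      ∃ ξ, SU y ξ + μ • ι ξ = ψ :=
    LinearMap.surjective_add_smul_of_norm_sub_le (S₀ := (S x : W →ₗ[ℂ] H)) (T := SU y)
      (ι := ι) hreal hx_bij.1 hμ h ha0 ha1 (hSU y).2 ψ
  refine ⟨SU, hSU_cont, fun y hy ↦ hSU_eq hy, fun y ↦ (hSU y).1, fun y ψ ↦ ⟨?_, ?_⟩,
    fun y ↦ (hSU y).2, fun y ↦ ⟨?_, ?_⟩⟩
  · exact hsurj Complex.I Complex.I_re (fun ψ ↦ (h_sa x hxU ψ).1) y ψ
  · simpa only [neg_smul, ← sub_eq_add_neg] using hsurj (-Complex.I) (by simp)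
      (fun ψ ↦ by simpa only [neg_smul, ← sub_eq_add_neg] using (h_sa x hxU ψ).2) y ψ
  · exact LinearMap.bijective_of_norm_sub_le (E := (S x : W →ₗ[ℂ] H)) hx_bij ha0 ha1 (hSU y).2
  · exact LinearMap.norm_le_inv_one_sub_mul_of_norm_sub_le (S₀ := (S x : W →ₗ[ℂ] H))
      (ι : W →ₗ[ℂ] H) hx_bij.1 hc ha1 (hSU y).2

/-- Hilbert-space case of Lemma 3.9(2), `extension`.
Setup as in Statement 9, but additionally `S x : W → H` is bijective with bounded inverse
(`c` is a bound for `‖S(x)⁻¹‖`, expressed by `‖ι ξ‖ ≤ c‖S x ξ‖`), and the smallness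
condition reads `‖(S y − S x)ξ‖ ≤ a‖S x ξ‖` on `Ū`.  Then there is a norm-continuous
family `{SU y}_{y∈M}` of self-adjoint operators with domain `W` extending `S|_Ū`,
satisfying the same bound globally, with every `SU y : W → H` bijective and
`‖SU(y)⁻¹‖ ≤ (1−a)⁻¹‖S(x)⁻¹‖`. -/
theorem extension_two
    {M : Type*} [MetricSpace M]
    {H : Type*} [NormedAddCommGroup H] [InnerProductSpace ℂ H] [CompleteSpace H]
    {W : Type*} [NormedAddCommGroup W] [NormedSpace ℂ W] [CompleteSpace W]
    (ι : W →L[ℂ] H) (hι_inj : Function.Injective ι) (hι_dense : DenseRange ι)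
    (U : Set M) (hU : IsOpen U) (x : M) (hx : x ∈ U)
    (S : M → (W →L[ℂ] H))
    (hS_cont : ContinuousOn S (closure U))
    (h_graph : ∀ ξ : W, ‖ξ‖ ^ 2 = ‖ι ξ‖ ^ 2 + ‖S x ξ‖ ^ 2)
    (h_symm : ∀ y ∈ closure U, ∀ (ξ η : W),
      (inner ℂ (S y ξ) (ι η) : ℂ) = inner ℂ (ι ξ) (S y η))
    (h_sa : ∀ y ∈ closure U, ∀ ψ : H,
      (∃ ξ : W, S y ξ + Complex.I • ι ξ = ψ) ∧ (∃ ξ : W, S y ξ - Complex.I • ι ξ = ψ))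
    (hx_bij : Function.Bijective ⇑(S x))
    (c : ℝ) (hc : ∀ ξ : W, ‖ι ξ‖ ≤ c * ‖S x ξ‖)
    (a : ℝ) (ha0 : 0 ≤ a) (ha1 : a < 1)
    (h_small : ∀ y ∈ closure U, ∀ ξ : W, ‖S y ξ - S x ξ‖ ≤ a * ‖S x ξ‖) :
    ∃ SU : M → (W →L[ℂ] H),
      Continuous SU ∧
      (∀ y ∈ closure U, SU y = S y) ∧
      (∀ (y : M) (ξ η : W), (inner ℂ (SU y ξ) (ι η) : ℂ) = inner ℂ (ι ξ) (SU y η)) ∧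
      (∀ (y : M) (ψ : H),
        (∃ ξ : W, SU y ξ + Complex.I • ι ξ = ψ) ∧
        (∃ ξ : W, SU y ξ - Complex.I • ι ξ = ψ)) ∧
      (∀ (y : M) (ξ : W), ‖SU y ξ - S x ξ‖ ≤ a * ‖S x ξ‖) ∧
      (∀ y : M, Function.Bijective ⇑(SU y) ∧
        ∀ ξ : W, ‖ι ξ‖ ≤ (1 - a)⁻¹ * c * ‖SU y ξ‖) :=
  extension_two_general ι U x hx S hS_cont h_symm h_sa hx_bij c hc a ha0 ha1 h_small
end

section
/- Let T be a self-adjoint operator on a complex Hilbert space H with domain W such that T : W → H is bijective with bounded everywhere-defined inverse T⁻¹. Let S be a symmetric operator with domain W, and let a ∈ [0,1) satisfy ‖(S − T)ξ‖ ≤ a‖Tξ‖ for all ξ ∈ W (equivalently, ‖(S−T)T⁻¹‖ ≤ a). Then S is self-adjoint with domain W, S : W → H is bijective with bounded inverse, ‖T(S⁻¹ψ)‖ ≤ (1−a)⁻¹‖ψ‖ for all ψ ∈ H, and ‖S⁻¹‖ ≤ (1−a)⁻¹‖T⁻¹‖. [Perturbation claim used in the proofs of Lemma 3.7 (uegn),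 Lemma 3.9 (extension) and Lemma 4.3 (inv_glob), combining the Kato–Rellich theorem with a Neumann series argument.] -/
/-!
Write `S ± i = (T ± i) + (S - T)` and `S = T + (S - T)`. Since `T` is symmetric,
`‖(T ± i)ξ‖² = ‖Tξ‖² + ‖ιξ‖² ≥ ‖Tξ‖²`, so in all three cases the perturbation `D = S - T`
satisfies `‖Dξ‖ ≤ a‖Aξ‖` for the unperturbed surjection `A`. Then `D A⁻¹` has norm `≤ a < 1`,
so `A + D = (1 + D A⁻¹) A` is onto by the Neumann series. The estimates follow from
`‖Sξ‖ ≥ ‖Tξ‖ - ‖(S - T)ξ‖ ≥ (1 - a)‖Tξ‖` and `ξ = T⁻¹(Tξ)`.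
-/

theorem LinearMap.surjective_add_of_bijective_of_norm_le
    {𝕜 W H : Type*} [NontriviallyNormedField 𝕜] [AddCommGroup W] [Module 𝕜 W]
    [NormedAddCommGroup H] [NormedSpace 𝕜 H] [CompleteSpace H]
    {A D : W →ₗ[𝕜] H} (hA : Function.Bijective A) {a : ℝ} (ha : a < 1)
    (hD : ∀ ξ, ‖D ξ‖ ≤ a * ‖A ξ‖) :
    Function.Surjective (A + D) := by
  let e := LinearEquiv.ofBijective A hA
  have hB : ∀ ψ, ‖(D ∘ₗ e.symm.toLinearMap) ψ‖ ≤ a * ‖ψ‖ := fun ψ => by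
    simpa [e] using hD (e.symm ψ)
  set B := (D ∘ₗ e.symm.toLinearMap).mkContinuous a hB
  have hB_norm : ‖-B‖ < 1 := by
    rw [norm_neg]
    exact (LinearMap.mkContinuous_norm_le' _ hB).trans_lt (max_lt ha one_pos)
  have h_unit : Function.Surjective ⇑(1 + B) := by
    simpa using (ContinuousLinearMap.isUnit_iff_bijective.mp
      (isUnit_one_sub_of_norm_lt_one hB_norm)).2
  intro ψ
  obtain ⟨φ, rfl⟩ := h_unit ψ
  exact ⟨e.symm φ, by simp [B, e]⟩

theorem LinearMap.injective_of_norm_le_mul_norm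
    {𝕜 W H : Type*} [NormedField 𝕜] [AddCommGroup W] [Module 𝕜 W]
    [NormedAddCommGroup H] [NormedSpace 𝕜 H]
    {T A : W →ₗ[𝕜] H} (hT : Function.Injective T) {C : ℝ}
    (hTA : ∀ ξ, ‖T ξ‖ ≤ C * ‖A ξ‖) :
    Function.Injective A := by
  refine (injective_iff_map_eq_zero A).mpr fun ξ hξ => hT ?_
  simpa [hξ] using hTA ξ

theorem LinearMap.surjective_add_of_norm_le
    {𝕜 W H : Type*} [NontriviallyNormedField 𝕜] [AddCommGroup W] [Module 𝕜 W]
    [NormedAddCommGroup H] [NormedSpace 𝕜 H] [CompleteSpace H]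
    {T A D : W →ₗ[𝕜] H} (hT : Function.Injective T) (hA : Function.Surjective A)
    (hTA : ∀ ξ, ‖T ξ‖ ≤ ‖A ξ‖) {a : ℝ} (ha0 : 0 ≤ a) (ha1 : a < 1)
    (hD : ∀ ξ, ‖D ξ‖ ≤ a * ‖T ξ‖) :
    Function.Surjective (A + D) := by
  have hA_inj := injective_of_norm_le_mul_norm hT (C := 1) (by simpa using hTA)
  exact surjective_add_of_bijective_of_norm_le ⟨hA_inj, hA⟩ ha1 fun ξ =>
    (hD ξ).trans (mul_le_mul_of_nonneg_left (hTA ξ) ha0)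

theorem norm_le_norm_add_smul_of_inner_comm
    {H : Type*} [NormedAddCommGroup H] [InnerProductSpace ℂ H]
    {x y : H} (hxy : inner ℂ x y = inner ℂ y x) {c : ℂ} (hc : c.re = 0) :
    ‖x‖ ≤ ‖x + c • y‖ := by
  have h_im : (inner ℂ x y).im = 0 := by
    rw [← Complex.conj_eq_iff_im, inner_conj_symm, hxy]
  have h_re : RCLike.re (inner ℂ x (c • y)) = 0 := by simp [hc, h_im]
  have h_sq : ‖x‖ ^ 2 ≤ ‖x + c • y‖ ^ 2 := by
    rw [norm_add_sq (𝕜 := ℂ), h_re]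
    linarith [sq_nonneg ‖c • y‖]
  exact le_of_pow_le_pow_left₀ two_ne_zero (norm_nonneg _) h_sq

theorem norm_le_inv_one_sub_mul_norm_of_norm_sub_le
    {E : Type*} [SeminormedAddCommGroup E] {x y : E} {a : ℝ} (ha : a < 1)
    (h : ‖y - x‖ ≤ a * ‖x‖) :
    ‖x‖ ≤ (1 - a)⁻¹ * ‖y‖ := by
  rw [le_inv_mul_iff₀ (sub_pos.mpr ha)]
  linarith [norm_sub_norm_le x y, norm_sub_rev x y]

theorem kato_rellich_neumann_general
    {H : Type*} [NormedAddCommGroup H] [InnerProductSpace ℂ H] [CompleteSpace H]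
    {W : Type*} [NormedAddCommGroup W] [NormedSpace ℂ W]
    (ι : W →L[ℂ] H)
    (T : W →L[ℂ] H)
    (hT_symm : ∀ ξ η : W, (inner ℂ (T ξ) (ι η) : ℂ) = inner ℂ (ι ξ) (T η))
    (hT_sa : ∀ ψ : H,
      (∃ ξ : W, T ξ + Complex.I • ι ξ = ψ) ∧ (∃ ξ : W, T ξ - Complex.I • ι ξ = ψ))
    (Tinv : H →L[ℂ] W)
    (hTinv1 : ∀ ψ : H, T (Tinv ψ) = ψ)
    (hTinv2 : ∀ ξ : W, Tinv (T ξ) = ξ)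
    (S : W →L[ℂ] H)
    (a : ℝ) (ha0 : 0 ≤ a) (ha1 : a < 1)
    (hST : ∀ ξ : W, ‖S ξ - T ξ‖ ≤ a * ‖T ξ‖) :
    (∀ ψ : H,
      (∃ ξ : W, S ξ + Complex.I • ι ξ = ψ) ∧ (∃ ξ : W, S ξ - Complex.I • ι ξ = ψ)) ∧
    Function.Bijective ⇑S ∧
    (∀ ξ : W, ‖T ξ‖ ≤ (1 - a)⁻¹ * ‖S ξ‖) ∧
    (∀ ξ : W, ‖ι ξ‖ ≤ (1 - a)⁻¹ * ‖(ι.comp Tinv : H →L[ℂ] H)‖ * ‖S ξ‖) := by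
  have hT_inj : Function.Injective T := Function.LeftInverse.injective hTinv2
  have hTS (ξ : W) : ‖T ξ‖ ≤ (1 - a)⁻¹ * ‖S ξ‖ :=
    norm_le_inv_one_sub_mul_norm_of_norm_sub_le ha1 (hST ξ)
  have h_perturb (A : W →L[ℂ] H) (hA : Function.Surjective A) (hTA : ∀ ξ, ‖T ξ‖ ≤ ‖A ξ‖)
      (ψ : H) : ∃ ξ, A ξ + (S ξ - T ξ) = ψ := by
    simpa using LinearMap.surjective_add_of_norm_le (D := (S - T : W →L[ℂ] H))
      (T := T) hT_inj hA hTA ha0 ha1 (by simpa using hST) ψ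
  have h_shift (c : ℂ) (hc : c.re = 0) (hTc : ∀ ψ, ∃ ξ, T ξ + c • ι ξ = ψ) (ψ : H) :
      ∃ ξ, S ξ + c • ι ξ = ψ := by
    obtain ⟨ξ, hξ⟩ := h_perturb (T + c • ι) (fun φ => by simpa using hTc φ)
      (fun ξ => by simpa using norm_le_norm_add_smul_of_inner_comm (hT_symm ξ ξ) hc) ψ
    exact ⟨ξ, by rw [← hξ]; simp only [add_apply, smul_apply]; abel⟩
  refine ⟨fun ψ => ⟨h_shift _ Complex.I_re (hT_sa · |>.1) ψ, ?_⟩, ⟨?_, fun ψ => ?_⟩, hTS,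
    fun ξ => ?_⟩
  · simpa [sub_eq_add_neg] using h_shift (-Complex.I) (by simp)
      (by simpa [sub_eq_add_neg] using (hT_sa · |>.2)) ψ
  · exact LinearMap.injective_of_norm_le_mul_norm (A := (S : W →ₗ[ℂ] H)) hT_inj hTS
  · obtain ⟨ξ, hξ⟩ := h_perturb T (Function.RightInverse.surjective hTinv1) (fun _ => le_rfl) ψ
    exact ⟨ξ, by rw [← hξ, add_sub_cancel]⟩
  · calc ‖ι ξ‖ = ‖(ι.comp Tinv) (T ξ)‖ := by simp [hTinv2]
      _ ≤ ‖ι.comp Tinv‖ * ‖T ξ‖ := (ι.comp Tinv).le_opNorm _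
      _ ≤ ‖ι.comp Tinv‖ * ((1 - a)⁻¹ * ‖S ξ‖) := by gcongr; exact hTS ξ
      _ = (1 - a)⁻¹ * ‖ι.comp Tinv‖ * ‖S ξ‖ := by ring

/-- Kato–Rellich + Neumann series perturbation claim used in
Lemmas 3.7, 3.9 and 4.3.
`T` is a self-adjoint operator on `H` with dense domain `W` (abstract encoding: `W` a
complete normed space with injective dense inclusion `ι : W →L[ℂ] H`; self-adjointness
= symmetry plus surjectivity of `T ± i`), bijective `W → H` with bounded
everywhere-defined inverse `Tinv` (valued in `W`).  `S` is symmetric with domain `W` and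
`‖(S − T)ξ‖ ≤ a‖Tξ‖` for all `ξ ∈ W`, where `a ∈ [0,1)`.  Then `S` is self-adjoint with
domain `W` (i.e. `S ± i` are surjective), `S : W → H` is bijective,
`‖T (S⁻¹ ψ)‖ ≤ (1−a)⁻¹‖ψ‖` (i.e. `‖Tξ‖ ≤ (1−a)⁻¹‖Sξ‖`), and
`‖S⁻¹‖ ≤ (1−a)⁻¹‖T⁻¹‖` (i.e. `‖ι ξ‖ ≤ (1−a)⁻¹‖ι ∘ Tinv‖‖Sξ‖`). -/
theorem kato_rellich_neumann
    {H : Type*} [NormedAddCommGroup H] [InnerProductSpace ℂ H] [CompleteSpace H]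
    {W : Type*} [NormedAddCommGroup W] [NormedSpace ℂ W] [CompleteSpace W]
    (ι : W →L[ℂ] H) (hι_inj : Function.Injective ι) (hι_dense : DenseRange ι)
    (T : W →L[ℂ] H)
    (hT_symm : ∀ ξ η : W, (inner ℂ (T ξ) (ι η) : ℂ) = inner ℂ (ι ξ) (T η))
    (hT_sa : ∀ ψ : H,
      (∃ ξ : W, T ξ + Complex.I • ι ξ = ψ) ∧ (∃ ξ : W, T ξ - Complex.I • ι ξ = ψ))
    (Tinv : H →L[ℂ] W)
    (hTinv1 : ∀ ψ : H, T (Tinv ψ) = ψ)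
    (hTinv2 : ∀ ξ : W, Tinv (T ξ) = ξ)
    (S : W →L[ℂ] H)
    (hS_symm : ∀ ξ η : W, (inner ℂ (S ξ) (ι η) : ℂ) = inner ℂ (ι ξ) (S η))
    (a : ℝ) (ha0 : 0 ≤ a) (ha1 : a < 1)
    (hST : ∀ ξ : W, ‖S ξ - T ξ‖ ≤ a * ‖T ξ‖) :
    (∀ ψ : H,
      (∃ ξ : W, S ξ + Complex.I • ι ξ = ψ) ∧ (∃ ξ : W, S ξ - Complex.I • ι ξ = ψ)) ∧
    Function.Bijective ⇑S ∧
    (∀ ξ : W, ‖T ξ‖ ≤ (1 - a)⁻¹ * ‖S ξ‖) ∧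
    (∀ ξ : W, ‖ι ξ‖ ≤ (1 - a)⁻¹ * ‖(ι.comp Tinv : H →L[ℂ] H)‖ * ‖S ξ‖) :=
  kato_rellich_neumann_general ι T hT_symm hT_sa Tinv hTinv1 hTinv2 S a ha0 ha1 hST
end

section
/- Assume the family {S(x)}_{x∈X} satisfies assumptions (a1), (a2) and (a3) with compact set K ⊆ X. Let f : X → (0,∞) be a continuous strictly positive function vanishing at infinity with f(x) = 1 for all x ∈ K. For each x ∈ X the operator f(x)⁻¹S(x) is self-adjoint with domain W, so (f(x)⁻¹S(x) + i)⁻¹ is an everywhere-defined bounded operator. Then the map x ↦ (f(x)⁻¹S(x) + i)⁻¹ is norm-continuous, takes values in the compact operators on H, and vanishes in operator norm at infinity (for every ε > 0 there is a compact set C ⊆ X with ‖(f(x)⁻¹S(x)+i)⁻¹‖ < ε for x ∉ C); i.e. it defines an element of C₀(X, K(H)), so the rescaled operator f⁻¹S(·) has compact resolvent as an operator on the Hilbert C₀(X)-module C₀(X,H). [Hilbert-space content of Lemma 3.10 (pS_cpt_res).] -/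
open Filter Topology

/-!
The rescaled operator `T = f(x)⁻¹ S(x)` is still symmetric, so for `ξ = (T + i)⁻¹ ψ` the cross
term in `‖T ξ + i ξ‖²` is purely imaginary and `‖ψ‖² = ‖T ξ‖² + ‖ξ‖²`: the resolvent is a
contraction, and so is `T (T + i)⁻¹`. Norm-continuity then follows from the resolvent identity
`R(x) - R(y) = R(x) (T(y) - T(x)) R(y)`, compactness from (a1), and outside `K` assumption (a3)
gives `‖ξ‖ ≤ c ‖S(x) ξ‖ = c f(x) ‖T ξ‖ ≤ c f(x) ‖ψ‖`, which vanishes at infinity with `f`.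
-/

theorem tendsto_cocompact_nhds_zero_iff {X E : Type*} [TopologicalSpace X]
    [SeminormedAddCommGroup E] {g : X → E} :
    Tendsto g (cocompact X) (𝓝 0) ↔ ∀ ε > 0, ∃ C : Set X, IsCompact C ∧ ∀ x ∉ C, ‖g x‖ < ε := by
  simp only [Metric.tendsto_nhds, dist_zero_right, hasBasis_cocompact.eventually_iff,
    Set.mem_compl_iff]

namespace ContinuousLinearMap

variable {𝕜 E F G X : Type*} [NontriviallyNormedField 𝕜]
  [NormedAddCommGroup E] [NormedSpace 𝕜 E] [NormedAddCommGroup F] [NormedSpace 𝕜 F]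
  [NormedAddCommGroup G] [NormedSpace 𝕜 G]

theorem sub_eq_comp_sub_comp {A₁ A₂ : E →L[𝕜] F} {R₁ R₂ : F →L[𝕜] E}
    (h₁ : R₁ ∘L A₁ = .id 𝕜 E) (h₂ : A₂ ∘L R₂ = .id 𝕜 F) :
    R₁ - R₂ = R₁ ∘L (A₂ - A₁) ∘L R₂ := by
  rw [sub_comp, h₂, comp_sub, ← comp_assoc, h₁, comp_id, id_comp]

theorem continuous_comp_inverse_of_bounded [TopologicalSpace X] {A : X → (E →L[𝕜] F)}
    (hA : Continuous A) {R : X → (F →L[𝕜] E)} (hRA : ∀ x, R x ∘L A x = .id 𝕜 E)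
    (hAR : ∀ x, A x ∘L R x = .id 𝕜 F) (ι : E →L[𝕜] G) {M : ℝ} (hM : ∀ x, ‖ι ∘L R x‖ ≤ M) :
    Continuous fun x => ι ∘L R x := by
  refine continuous_iff_continuousAt.2 fun y => ?_
  have hdist : ∀ x, ‖ι ∘L R x - ι ∘L R y‖ ≤ M * ‖A y - A x‖ * ‖R y‖ := fun x => by
    rw [← comp_sub, sub_eq_comp_sub_comp (hRA x) (hAR y), ← comp_assoc, ← comp_assoc]
    calc _ ≤ ‖(ι ∘L R x) ∘L (A y - A x)‖ * ‖R y‖ := opNorm_comp_le _ _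
      _ ≤ M * ‖A y - A x‖ * ‖R y‖ := by
        gcongr
        exact (opNorm_comp_le _ _).trans (by gcongr; exact hM x)
  have hlim : Tendsto (fun x => M * ‖A y - A x‖ * ‖R y‖) (𝓝 y) (𝓝 0) := by
    have hAy : Continuous fun x => A y - A x := continuous_const.sub hA
    simpa using ((hAy.norm.tendsto y).const_mul M).mul_const ‖R y‖
  exact tendsto_iff_norm_sub_tendsto_zero.2 (squeeze_zero (fun _ => norm_nonneg _) hdist hlim)

end ContinuousLinearMap

section SymmetricWrt

variable {W H : Type*} [NormedAddCommGroup W] [NormedSpace ℂ W]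
  [NormedAddCommGroup H] [InnerProductSpace ℂ H]

/-- `T : W → H` is symmetric as an unbounded operator on `H` with domain `ι(W)`. -/
def IsSymmetricWrt (ι T : W →L[ℂ] H) : Prop :=
  ∀ ξ η, inner ℂ (T ξ) (ι η) = inner ℂ (ι ξ) (T η)

variable {ι T : W →L[ℂ] H}

theorem IsSymmetricWrt.real_smul (hT : IsSymmetricWrt ι T) (r : ℝ) :
    IsSymmetricWrt ι (r • T) := fun ξ η => by
  simp only [smul_apply, ← Complex.coe_smul, inner_smul_left,
    inner_smul_right, Complex.conj_ofReal, hT ξ η]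

theorem IsSymmetricWrt.norm_add_I_smul_sq (hT : IsSymmetricWrt ι T) (ξ : W) :
    ‖T ξ + Complex.I • ι ξ‖ ^ 2 = ‖T ξ‖ ^ 2 + ‖ι ξ‖ ^ 2 := by
  have him : (inner ℂ (T ξ) (ι ξ)).im = 0 := by
    have := congrArg Complex.im (hT ξ ξ)
    rw [← inner_conj_symm (ι ξ) (T ξ), Complex.conj_im] at this
    linarith
  rw [@norm_add_sq ℂ, inner_smul_right, norm_smul, Complex.norm_I, one_mul]
  simp [him]

theorem IsSymmetricWrt.norm_le_norm_add_I_smul (hT : IsSymmetricWrt ι T) (ξ : W) :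
    ‖ι ξ‖ ≤ ‖T ξ + Complex.I • ι ξ‖ ∧ ‖T ξ‖ ≤ ‖T ξ + Complex.I • ι ξ‖ := by
  have h := hT.norm_add_I_smul_sq ξ
  constructor <;> refine (pow_le_pow_iff_left₀ (norm_nonneg _) (norm_nonneg _) two_ne_zero).1 ?_
    <;> rw [h]
  exacts [le_add_of_nonneg_left (sq_nonneg _), le_add_of_nonneg_right (sq_nonneg _)]

theorem IsSymmetricWrt.norm_le_of_comp_eq_id (hT : IsSymmetricWrt ι T) {R : H →L[ℂ] W}
    (hR : (T + Complex.I • ι) ∘L R = .id ℂ H) (ψ : H) :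
    ‖ι (R ψ)‖ ≤ ‖ψ‖ ∧ ‖T (R ψ)‖ ≤ ‖ψ‖ := by
  have hψ : T (R ψ) + Complex.I • ι (R ψ) = ψ := DFunLike.congr_fun hR ψ
  simpa only [hψ] using hT.norm_le_norm_add_I_smul (R ψ)

theorem IsSymmetricWrt.opNorm_comp_le_one (hT : IsSymmetricWrt ι T) {R : H →L[ℂ] W}
    (hR : (T + Complex.I • ι) ∘L R = .id ℂ H) : ‖ι ∘L R‖ ≤ 1 :=
  ContinuousLinearMap.opNorm_le_bound _ zero_le_one fun ψ => by
    simpa using (hT.norm_le_of_comp_eq_id hR ψ).1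

theorem IsSymmetricWrt.opNorm_comp_le_mul (hT : IsSymmetricWrt ι T) {r : ℝ} (hr : 0 < r)
    {R : H →L[ℂ] W} (hR : (r⁻¹ • T + Complex.I • ι) ∘L R = .id ℂ H) {Tinv : H → W} {c : ℝ}
    (hc : 0 ≤ c) (hTinv : ∀ ξ, Tinv (T ξ) = ξ) (hTinv_bdd : ∀ ψ, ‖ι (Tinv ψ)‖ ≤ c * ‖ψ‖) :
    ‖ι ∘L R‖ ≤ c * r :=
  ContinuousLinearMap.opNorm_le_bound _ (by positivity) fun ψ =>
    calc ‖ι (R ψ)‖ = ‖ι (Tinv (T (R ψ)))‖ := by rw [hTinv]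
      _ ≤ c * ‖T (R ψ)‖ := hTinv_bdd _
      _ = c * r * ‖(r⁻¹ • T) (R ψ)‖ := by
        rw [smul_apply, norm_smul, Real.norm_of_nonneg (by positivity)]
        field_simp
      _ ≤ c * r * ‖ψ‖ := by
        gcongr
        exact ((hT.real_smul r⁻¹).norm_le_of_comp_eq_id hR ψ).2

end SymmetricWrt

theorem pS_cpt_res_general
    {X : Type*} [TopologicalSpace X]
    {H : Type*} [NormedAddCommGroup H] [InnerProductSpace ℂ H]
    {W : Type*} [NormedAddCommGroup W] [NormedSpace ℂ W]
    (ι : W →L[ℂ] H)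
    (hι_cpt : IsCompactOperator ⇑ι)
    (S : X → (W →L[ℂ] H))
    (h_symm : ∀ (x : X) (ξ η : W), (inner ℂ (S x ξ) (ι η) : ℂ) = inner ℂ (ι ξ) (S x η))
    (hS_cont : Continuous S)
    (K : Set X) (hK : IsCompact K)
    (c : ℝ) (hc : 0 < c)
    (Sinv : X → (H →L[ℂ] W))
    (hSinv2 : ∀ x ∉ K, ∀ ξ : W, Sinv x (S x ξ) = ξ)
    (hSinv_bdd : ∀ x ∉ K, ∀ ψ : H, ‖ι (Sinv x ψ)‖ ≤ c * ‖ψ‖)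
    (f : X → ℝ) (hf_cont : Continuous f) (hf_pos : ∀ x, 0 < f x)
    (hf_zero : ∀ ε > 0, ∃ C : Set X, IsCompact C ∧ ∀ x ∉ C, |f x| < ε)
    (Rf : X → (H →L[ℂ] W))
    (hRf1 : ∀ (x : X) (ψ : H),
      (f x)⁻¹ • S x (Rf x ψ) + Complex.I • ι (Rf x ψ) = ψ)
    (hRf2 : ∀ (x : X) (ξ : W),
      Rf x ((f x)⁻¹ • S x ξ + Complex.I • ι ξ) = ξ) :
    Continuous (fun x => (ι.comp (Rf x) : H →L[ℂ] H)) ∧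
    (∀ x : X, IsCompactOperator ⇑(ι.comp (Rf x))) ∧
    (∀ ε > 0, ∃ C : Set X, IsCompact C ∧ ∀ x ∉ C,
      ‖(ι.comp (Rf x) : H →L[ℂ] H)‖ < ε) := by
  set A : X → (W →L[ℂ] H) := fun x => (f x)⁻¹ • S x + Complex.I • ι
  have hAR : ∀ x, A x ∘L Rf x = .id ℂ H := fun x => ContinuousLinearMap.ext (hRf1 x)
  have hRA : ∀ x, Rf x ∘L A x = .id ℂ W := fun x => ContinuousLinearMap.ext (hRf2 x)
  have hA : Continuous A :=
    ((hf_cont.inv₀ fun x => (hf_pos x).ne').smul hS_cont).add continuous_const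
  have hsymm : ∀ x, IsSymmetricWrt ι (S x) := h_symm
  refine ⟨ContinuousLinearMap.continuous_comp_inverse_of_bounded hA hRA hAR ι
    fun x => ((hsymm x).real_smul _).opNorm_comp_le_one (hAR x),
    fun x => hι_cpt.comp_clm (Rf x), ?_⟩
  have hf_tendsto : Tendsto f (cocompact X) (𝓝 0) :=
    tendsto_cocompact_nhds_zero_iff.2 (by simpa only [Real.norm_eq_abs] using hf_zero)
  refine tendsto_cocompact_nhds_zero_iff.1 (squeeze_zero_norm' ?_ (by
    simpa using hf_tendsto.const_mul c))
  filter_upwards [hK.compl_mem_cocompact] with x hx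
  exact (hsymm x).opNorm_comp_le_mul (hf_pos x) (hAR x) hc.le (hSinv2 x hx) (hSinv_bdd x hx)

/-- Hilbert-space content of Lemma 3.10, `pS_cpt_res`.
Setup as in Statement 2, with assumptions (a1) (`hι_cpt`), (a2) (`hS_cont`) and (a3)
(`K`, `c`, `Sinv`) for the family `{S(x)}_{x∈X}` of self-adjoint operators with common
dense domain `W` (self-adjointness = symmetry plus surjectivity of `S x ± i`).
Let `f : X → (0,∞)` be continuous, strictly positive, vanishing at infinity, with
`f = 1` on `K`.  Each `f(x)⁻¹ S(x)` is self-adjoint with domain `W`, with resolvent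
`Rf x = (f(x)⁻¹S(x) + i)⁻¹` (valued in `W`).  Then `x ↦ (f(x)⁻¹S(x)+i)⁻¹` is
norm-continuous, takes values in the compact operators on `H`, and vanishes in operator
norm at infinity; i.e. it defines an element of `C₀(X, K(H))`. -/
theorem pS_cpt_res
    {X : Type*} [TopologicalSpace X] [LocallyCompactSpace X] [T2Space X]
    {H : Type*} [NormedAddCommGroup H] [InnerProductSpace ℂ H] [CompleteSpace H]
    {W : Type*} [NormedAddCommGroup W] [NormedSpace ℂ W] [CompleteSpace W]
    (ι : W →L[ℂ] H) (hι_inj : Function.Injective ι) (hι_dense : DenseRange ι)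
    (hι_cpt : IsCompactOperator ⇑ι)
    (S : X → (W →L[ℂ] H))
    (x₀ : X) (h_graph : ∀ ξ : W, ‖ξ‖ ^ 2 = ‖ι ξ‖ ^ 2 + ‖S x₀ ξ‖ ^ 2)
    (h_symm : ∀ (x : X) (ξ η : W), (inner ℂ (S x ξ) (ι η) : ℂ) = inner ℂ (ι ξ) (S x η))
    (h_sa : ∀ (x : X) (ψ : H),
      (∃ ξ : W, S x ξ + Complex.I • ι ξ = ψ) ∧ (∃ ξ : W, S x ξ - Complex.I • ι ξ = ψ))
    (hS_cont : Continuous S)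
    (K : Set X) (hK : IsCompact K)
    (c : ℝ) (hc : 0 < c)
    (Sinv : X → (H →L[ℂ] W))
    (hSinv1 : ∀ x ∉ K, ∀ ψ : H, S x (Sinv x ψ) = ψ)
    (hSinv2 : ∀ x ∉ K, ∀ ξ : W, Sinv x (S x ξ) = ξ)
    (hSinv_bdd : ∀ x ∉ K, ∀ ψ : H, ‖ι (Sinv x ψ)‖ ≤ c * ‖ψ‖)
    (f : X → ℝ) (hf_cont : Continuous f) (hf_pos : ∀ x, 0 < f x)
    (hf_zero : ∀ ε > 0, ∃ C : Set X, IsCompact C ∧ ∀ x ∉ C, |f x| < ε)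
    (hfK : ∀ x ∈ K, f x = 1)
    (Rf : X → (H →L[ℂ] W))
    (hRf1 : ∀ (x : X) (ψ : H),
      (f x)⁻¹ • S x (Rf x ψ) + Complex.I • ι (Rf x ψ) = ψ)
    (hRf2 : ∀ (x : X) (ξ : W),
      Rf x ((f x)⁻¹ • S x ξ + Complex.I • ι ξ) = ξ) :
    Continuous (fun x => (ι.comp (Rf x) : H →L[ℂ] H)) ∧
    (∀ x : X, IsCompactOperator ⇑(ι.comp (Rf x))) ∧
    (∀ ε > 0, ∃ C : Set X, IsCompact C ∧ ∀ x ∉ C,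
      ‖(ι.comp (Rf x) : H →L[ℂ] H)‖ < ε) :=
  pS_cpt_res_general ι hι_cpt S h_symm hS_cont K hK c hc Sinv hSinv2 hSinv_bdd f hf_cont hf_pos
    hf_zero Rf hRf1 hRf2
end

section
/- Let H be a complex Hilbert space equipped with a grading: a bounded self-adjoint unitary γ on H, with even part H⁰ = ker(γ−1) and odd part H¹ = ker(γ+1). Let D be a self-adjoint operator on H that is odd, i.e. γ·Dom(D) ⊆ Dom(D) and D(γψ) = −γ(Dψ) for all ψ ∈ Dom(D), and Fredholm in the sense that ker(D) is finite-dimensional and the range of D is closed. Suppose there exists a bounded self-adjoint unitary e on H that is odd (eγ = −γe) and satisfies e·Dom(D) ⊆ Dom(D), such that the anticommutator ψ ↦ D(eψ) + e(Dψ) (ψ ∈ Dom(D)) extends to a bounded operator A on H for which A∘(D+i)⁻¹ is a compact operator. Then dim(ker(D) ∩ H⁰) = dim(ker(D) ∩ H¹); equivalently, writing D in off-diagonal form with respect to the grading, the Fredholm index of its even-to-odd component D₊ is zero, i.e. the class [D] ∈ KK⁰(ℂ,ℂ) ≅ ℤ vanishes. [Hilbert-space case of Lemma 4.1 (cliff_triv).]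 -/
/-
Write `W⁰`, `W¹` for the even and odd parts of the domain of `D`. The index of `D₊ : W⁰ → H¹` is
stable under compact perturbations. Conjugating `D₋ : W¹ → H⁰` by the odd involution `e` gives
`-e D₋ e : W⁰ → H¹`, which differs from `D₊` by the restriction of `-e A`, a compact operator
relative to `D`; hence `index D₊ = index D₋`. Since `D` is self-adjoint, the cokernel of `D₊` is
`ker D ∩ W¹` and that of `D₋` is `ker D ∩ W⁰`, so `index D₋ = -index D₊` and both vanish.

Stability of the index under a compact perturbation `S'` of `S` uses a parametrix `Q` of `S`:
`S Q` and `S' Q` are compact perturbations of the identity of a Hilbert space, which have index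
zero (approximate the compact part by a finite-rank operator), and the index is additive under
composition.
-/

open Module LinearMap Submodule

namespace LinearMap

variable {k L M N P : Type*} [Field k] [AddCommGroup L] [Module k L] [AddCommGroup M] [Module k M]
  [AddCommGroup N] [Module k N] [AddCommGroup P] [Module k P]

section FiniteRankPerturbation

variable (F : M →ₗ[k] M)

lemma ker_id_add_le_range : ker (id + F) ≤ range F := fun x hx ↦
  ⟨-x, by rw [map_neg]; exact neg_eq_of_add_eq_zero_left (by simpa using hx)⟩

lemma id_add_apply_mem_range : ∀ x ∈ range F, (id + F : M →ₗ[k] M) x ∈ range F := fun x hx ↦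
  add_mem hx (mem_range_self F x)

lemma comap_range_id_add :
    comap (range F).subtype (range (id + F)) =
      range ((id + F).restrict (id_add_apply_mem_range F)) := by
  ext ⟨y, hy⟩
  simp only [mem_range]
  constructor
  · rintro ⟨x, rfl⟩
    have hx : x ∈ range F := by simpa using sub_mem hy (mem_range_self F x)
    exact ⟨⟨x, hx⟩, rfl⟩
  · rintro ⟨x, hx⟩
    exact ⟨x, congrArg Subtype.val hx⟩

lemma surjective_mkQ_comp_subtype_range :
    Function.Surjective ((range (id + F)).mkQ ∘ₗ (range F).subtype) := by
  intro y
  induction y using Submodule.Quotient.induction_on with | _ y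
  refine ⟨⟨-F y, neg_mem (mem_range_self F y)⟩, (Submodule.Quotient.eq _).2 ⟨-y, ?_⟩⟩
  simp only [add_apply, id_apply, map_neg, subtype_apply]
  abel

variable [FiniteDimensional k (range F)]

instance : FiniteDimensional k (ker (id + F)) :=
  Submodule.finiteDimensional_of_le (ker_id_add_le_range F)

instance : FiniteDimensional k (M ⧸ range (id + F)) :=
  Module.Finite.of_surjective _ (surjective_mkQ_comp_subtype_range F)

/-- Both the kernel and the cokernel of `id + F` are read off the restriction of `id + F` to the
finite-dimensional space `range F`, where rank-nullity applies. -/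
theorem index_id_add : (id + F).index = 0 := by
  have hq := finrank_range_add_finrank_ker ((range (id + F)).mkQ ∘ₗ (range F).subtype)
  rw [range_eq_top.2 (surjective_mkQ_comp_subtype_range F), finrank_top, ker_comp, ker_mkQ,
    comap_range_id_add] at hq
  set T := (id + F).restrict (id_add_apply_mem_range F)
  have hT := finrank_range_add_finrank_ker T
  rw [ker_restrict, (comapSubtypeEquivOfLe (ker_id_add_le_range F)).finrank_eq] at hT
  rw [index_eq_finrank_sub]
  omega

end FiniteRankPerturbation

section Comp

lemma finiteDimensional_ker_of_injective {f : M →ₗ[k] N} (hf : Function.Injective f) :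
    FiniteDimensional k (ker f) := by
  rw [ker_eq_bot.2 hf]; infer_instance

lemma finiteDimensional_coker_of_surjective {f : M →ₗ[k] N} (hf : Function.Surjective f) :
    FiniteDimensional k (N ⧸ range f) := by
  rw [range_eq_top.2 hf]; infer_instance

lemma index_eq_zero_of_bijective {f : M →ₗ[k] N} (hf : Function.Bijective f) : f.index = 0 := by
  rw [index_of_surjective hf.2, ker_eq_bot.2 hf.1, finrank_bot, Nat.cast_zero]

lemma finiteDimensional_ker_of_comp (f : M →ₗ[k] N) (g : N →ₗ[k] P)
    [FiniteDimensional k (ker (g ∘ₗ f))] : FiniteDimensional k (ker f) :=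
  Submodule.finiteDimensional_of_le (ker_le_ker_comp f g)

lemma finiteDimensional_coker_of_comp (f : M →ₗ[k] N) (g : N →ₗ[k] P)
    [FiniteDimensional k (P ⧸ range (g ∘ₗ f))] : FiniteDimensional k (P ⧸ range g) :=
  Module.Finite.of_surjective _ (factor_surjective (range_comp_le_range f g))

theorem index_comp_comp_of_bijective {g : N →ₗ[k] P} {f : M →ₗ[k] N} {h : L →ₗ[k] M}
    (hg : Function.Bijective g) (hh : Function.Bijective h)
    [FiniteDimensional k (ker f)] [FiniteDimensional k (N ⧸ range f)] :
    FiniteDimensional k (ker (g ∘ₗ f ∘ₗ h)) ∧ FiniteDimensional k (P ⧸ range (g ∘ₗ f ∘ₗ h)) ∧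
      (g ∘ₗ f ∘ₗ h).index = f.index := by
  have := finiteDimensional_ker_of_injective hg.1
  have := finiteDimensional_ker_of_injective hh.1
  have := finiteDimensional_coker_of_surjective hg.2
  have := finiteDimensional_coker_of_surjective hh.2
  have : FiniteDimensional k (ker (f ∘ₗ h)) := by rw [ker_comp]; infer_instance
  have : FiniteDimensional k (N ⧸ range (f ∘ₗ h)) := by rw [range_comp]; infer_instance
  refine ⟨by rw [ker_comp]; infer_instance, by rw [range_comp]; infer_instance, ?_⟩
  rw [index_comp, index_comp, index_eq_zero_of_bijective hg, index_eq_zero_of_bijective hh,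
    zero_add, add_zero]

end Comp

end LinearMap

theorem ContinuousLinearMap.bijective_restrict_of_inverse {R M N : Type*} [Semiring R]
    [AddCommMonoid M] [Module R M] [TopologicalSpace M] [AddCommMonoid N] [Module R N]
    [TopologicalSpace N] {f : M →L[R] N} {g : N →L[R] M} {p : Submodule R M} {q : Submodule R N}
    (hf : ∀ x ∈ p, f x ∈ q) (hg : ∀ y ∈ q, g y ∈ p) (hgf : ∀ x, g (f x) = x)
    (hfg : ∀ y, f (g y) = y) : Function.Bijective (f.restrict hf) :=
  Function.bijective_iff_has_inverse.2
    ⟨g.restrict hg, fun x ↦ Subtype.ext (hgf x), fun y ↦ Subtype.ext (hfg y)⟩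

section Hilbert

variable {𝕜 X Y : Type*} [RCLike 𝕜] [NormedAddCommGroup X] [NormedSpace 𝕜 X]
  [NormedAddCommGroup Y] [InnerProductSpace 𝕜 Y]

theorem ContinuousLinearMap.isCompactOperator_of_finiteDimensional_range (F : X →L[𝕜] Y)
    [FiniteDimensional 𝕜 (range (F : X →ₗ[𝕜] Y))] : IsCompactOperator F :=
  (isCompactOperator_of_locallyCompactSpace_dom
    (F.codRestrict _ fun x ↦ mem_range_self (F : X →ₗ[𝕜] Y) x)).continuous_comp
    continuous_subtype_val

/-- Project onto the span of a finite `ε`-net of the image of the unit ball. -/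
theorem IsCompactOperator.exists_finiteDimensional_range_norm_sub_le {C : X →L[𝕜] Y}
    (hC : IsCompactOperator C) {ε : ℝ} (hε : 0 < ε) :
    ∃ F : X →L[𝕜] Y, FiniteDimensional 𝕜 (range (F : X →ₗ[𝕜] Y)) ∧ ‖C - F‖ ≤ ε := by
  obtain ⟨t, ht, hCt⟩ := Metric.totallyBounded_iff.mp
    (hC.isCompact_closure_image_closedBall 1).totallyBounded ε hε
  set V := span 𝕜 t
  have : FiniteDimensional 𝕜 V := FiniteDimensional.span_of_finite 𝕜 ht
  refine ⟨V.starProjection ∘L C, ?_, ?_⟩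
  · refine Submodule.finiteDimensional_of_le (S₂ := V) ?_
    rintro _ ⟨x, rfl⟩
    exact V.starProjection_apply_mem _
  · refine ContinuousLinearMap.opNorm_le_of_unit_norm hε.le fun x hx ↦ ?_
    have hCx : C x ∈ closure (C '' Metric.closedBall 0 1) :=
      subset_closure ⟨x, by simp [hx], rfl⟩
    obtain ⟨y, hy, hxy⟩ := Set.mem_iUnion₂.mp (hCt hCx)
    calc ‖(C - V.starProjection ∘L C) x‖ = ⨅ v : V, ‖C x - v‖ := starProjection_minimal (C x)
      _ ≤ ‖C x - y‖ := ciInf_le ⟨0, by rintro _ ⟨v, rfl⟩; positivity⟩ (⟨y, subset_span hy⟩ : V)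
      _ ≤ ε := (mem_ball_iff_norm.mp hxy).le

variable [CompleteSpace Y]

/-- With `F` of finite rank and `‖C - F‖ < 1`, `1 + C = U (1 + U⁻¹ F)` for the unit
`U = 1 - (F - C)`. -/
theorem IsCompactOperator.index_one_add {C : Y →L[𝕜] Y} (hC : IsCompactOperator C) :
    FiniteDimensional 𝕜 (ker ((1 + C : Y →L[𝕜] Y) : Y →ₗ[𝕜] Y)) ∧
    FiniteDimensional 𝕜 (Y ⧸ range ((1 + C : Y →L[𝕜] Y) : Y →ₗ[𝕜] Y)) ∧
    ((1 + C : Y →L[𝕜] Y) : Y →ₗ[𝕜] Y).index = 0 := by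
  obtain ⟨F, hF, hCF⟩ := hC.exists_finiteDimensional_range_norm_sub_le one_half_pos
  set U := Units.oneSub (F - C) (by rw [norm_sub_rev]; linarith)
  set G := ((U⁻¹ : (Y →L[𝕜] Y)ˣ) : Y →L[𝕜] Y) * F
  have : FiniteDimensional 𝕜 (range (G : Y →ₗ[𝕜] Y)) := by
    rw [ContinuousLinearMap.toLinearMap_mul, Module.End.mul_eq_comp, range_comp]; infer_instance
  have hfactor : 1 + C = (U : Y →L[𝕜] Y) * (1 + G) := by
    rw [mul_add, mul_one, ← mul_assoc, Units.mul_inv, one_mul, Units.val_oneSub]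
    abel
  set e := (ContinuousLinearEquiv.unitsEquiv 𝕜 Y U).toLinearEquiv
  replace hfactor : ((1 + C : Y →L[𝕜] Y) : Y →ₗ[𝕜] Y) =
      e.toLinearMap ∘ₗ (LinearMap.id + (G : Y →ₗ[𝕜] Y)) := by
    rw [hfactor]; rfl
  have := finiteDimensional_ker_of_injective e.injective
  have := finiteDimensional_coker_of_surjective e.surjective
  rw [hfactor]
  refine ⟨by rw [ker_comp]; infer_instance, by rw [range_comp]; infer_instance, ?_⟩
  rw [index_comp, LinearEquiv.index_eq_zero, index_id_add, add_zero]

variable [CompleteSpace X]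

/-- `Q` inverts `S` from a closed complement of `ker S` onto `range S`, composed with the
orthogonal projection onto `range S`. -/
theorem ContinuousLinearMap.exists_sub_apply_mem_orthogonal (S : X →L[𝕜] Y)
    [FiniteDimensional 𝕜 (ker (S : X →ₗ[𝕜] Y))] (hS : IsClosed (range (S : X →ₗ[𝕜] Y) : Set Y)) :
    ∃ Q : Y →L[𝕜] X, ∀ y, y - S (Q y) ∈ (range (S : X →ₗ[𝕜] Y))ᗮ := by
  set R := range (S : X →ₗ[𝕜] Y)
  obtain ⟨X₁, hX₁, hcompl⟩ := (ClosedComplemented.of_finiteDimensional (𝕜 := 𝕜)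
    (ker (S : X →ₗ[𝕜] Y))).exists_isClosed_isCompl
  have := hX₁.completeSpace_coe
  have := hS.completeSpace_coe
  set S₁ : X₁ →L[𝕜] R :=
    (S ∘L X₁.subtypeL).codRestrict R fun x ↦ mem_range_self (S : X →ₗ[𝕜] Y) x
  have hinj : ker (S₁ : X₁ →ₗ[𝕜] R) = ⊥ := by
    refine ker_eq_bot'.2 fun x hx ↦ Subtype.ext ?_
    exact (disjoint_def.1 hcompl.disjoint) x (congrArg Subtype.val hx) x.2
  have hsurj : range (S₁ : X₁ →ₗ[𝕜] R) = ⊤ := by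
    refine range_eq_top.2 fun ⟨_, x, rfl⟩ ↦ ?_
    obtain ⟨k, hk, x₁, hx₁, rfl⟩ :=
      mem_sup.1 (hcompl.sup_eq_top ▸ Submodule.mem_top : x ∈ _ ⊔ X₁)
    refine ⟨⟨x₁, hx₁⟩, Subtype.ext ?_⟩
    change S x₁ = S (k + x₁)
    rw [map_add, show S k = 0 from hk, zero_add]
  set e := ContinuousLinearEquiv.ofBijective S₁ hinj hsurj
  refine ⟨X₁.subtypeL ∘L (e.symm : R →L[𝕜] X₁) ∘L R.orthogonalProjectionOnto, fun y ↦ ?_⟩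
  have hSe : S (e.symm (R.orthogonalProjectionOnto y)) = R.starProjection y :=
    congrArg Subtype.val (e.apply_symm_apply _)
  change y - S (e.symm (R.orthogonalProjectionOnto y)) ∈ Rᗮ
  rw [hSe]
  exact R.sub_starProjection_mem_orthogonal y

theorem ContinuousLinearMap.exists_parametrix (S : X →L[𝕜] Y)
    [FiniteDimensional 𝕜 (ker (S : X →ₗ[𝕜] Y))] [FiniteDimensional 𝕜 (Y ⧸ range (S : X →ₗ[𝕜] Y))]
    (hS : IsClosed (range (S : X →ₗ[𝕜] Y) : Set Y)) :
    ∃ Q : Y →L[𝕜] X, FiniteDimensional 𝕜 (range ((S ∘L Q - 1 : Y →L[𝕜] Y) : Y →ₗ[𝕜] Y)) ∧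
      FiniteDimensional 𝕜 (range ((Q ∘L S - 1 : X →L[𝕜] X) : X →ₗ[𝕜] X)) := by
  obtain ⟨Q, hQ⟩ := S.exists_sub_apply_mem_orthogonal hS
  have := hS.completeSpace_coe
  have : FiniteDimensional 𝕜 (range (S : X →ₗ[𝕜] Y))ᗮ :=
    Module.Finite.equiv (quotientEquivOfIsCompl _ _ (isCompl_orthogonal _))
  refine ⟨Q, Submodule.finiteDimensional_of_le (S₂ := (range (S : X →ₗ[𝕜] Y))ᗮ) ?_,
    Submodule.finiteDimensional_of_le (S₂ := ker (S : X →ₗ[𝕜] Y)) ?_⟩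
  · rintro _ ⟨y, rfl⟩
    simpa using neg_mem (hQ y)
  · rintro _ ⟨x, rfl⟩
    have h_range : S (Q (S x)) - S x ∈ range (S : X →ₗ[𝕜] Y) :=
      sub_mem (mem_range_self (S : X →ₗ[𝕜] Y) _) (mem_range_self (S : X →ₗ[𝕜] Y) x)
    have h_orth : S (Q (S x)) - S x ∈ (range (S : X →ₗ[𝕜] Y))ᗮ := by
      simpa using neg_mem (hQ (S x))
    simpa [sub_eq_zero] using (orthogonal_disjoint _).le_bot ⟨h_range, h_orth⟩

theorem ContinuousLinearMap.index_eq_of_isCompactOperator_sub (S S' : X →L[𝕜] Y)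
    [FiniteDimensional 𝕜 (ker (S : X →ₗ[𝕜] Y))] [FiniteDimensional 𝕜 (Y ⧸ range (S : X →ₗ[𝕜] Y))]
    (hS : IsClosed (range (S : X →ₗ[𝕜] Y) : Set Y)) [FiniteDimensional 𝕜 (ker (S' : X →ₗ[𝕜] Y))]
    [FiniteDimensional 𝕜 (Y ⧸ range (S' : X →ₗ[𝕜] Y))] (hK : IsCompactOperator (S' - S)) :
    (S' : X →ₗ[𝕜] Y).index = (S : X →ₗ[𝕜] Y).index := by
  obtain ⟨Q, _, _⟩ := S.exists_parametrix hS
  have hSQ : (S : X →ₗ[𝕜] Y) ∘ₗ (Q : Y →ₗ[𝕜] X) =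
      LinearMap.id + ((S ∘L Q - 1 : Y →L[𝕜] Y) : Y →ₗ[𝕜] Y) := by
    ext y; simp
  have hQS : (Q : Y →ₗ[𝕜] X) ∘ₗ (S : X →ₗ[𝕜] Y) =
      LinearMap.id + ((Q ∘L S - 1 : X →L[𝕜] X) : X →ₗ[𝕜] X) := by
    ext x; simp
  have : FiniteDimensional 𝕜 (ker (Q : Y →ₗ[𝕜] X)) :=
    have : FiniteDimensional 𝕜 (ker ((S : X →ₗ[𝕜] Y) ∘ₗ (Q : Y →ₗ[𝕜] X))) := by
      rw [hSQ]; infer_instance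
    finiteDimensional_ker_of_comp _ (S : X →ₗ[𝕜] Y)
  have : FiniteDimensional 𝕜 (X ⧸ range (Q : Y →ₗ[𝕜] X)) :=
    have : FiniteDimensional 𝕜 (X ⧸ range ((Q : Y →ₗ[𝕜] X) ∘ₗ (S : X →ₗ[𝕜] Y))) := by
      rw [hQS]; infer_instance
    finiteDimensional_coker_of_comp (S : X →ₗ[𝕜] Y) _
  have hSQ_index : ((S : X →ₗ[𝕜] Y) ∘ₗ (Q : Y →ₗ[𝕜] X)).index = 0 := by
    rw [hSQ, index_id_add]
  have hS'Q_index : ((S' : X →ₗ[𝕜] Y) ∘ₗ (Q : Y →ₗ[𝕜] X)).index = 0 := by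
    have hC : IsCompactOperator ((S' - S) ∘L Q + (S ∘L Q - 1) : Y →L[𝕜] Y) :=
      (hK.comp_clm Q).add (S ∘L Q - 1).isCompactOperator_of_finiteDimensional_range
    simpa using hC.index_one_add.2.2
  rw [index_comp] at hSQ_index hS'Q_index
  linarith

end Hilbert

section Grading

variable {𝕜 H W : Type*} [RCLike 𝕜] [NormedAddCommGroup H] [InnerProductSpace 𝕜 H]
  [NormedAddCommGroup W] [NormedSpace 𝕜 W] {ι : W →L[𝕜] H} {γ : H →L[𝕜] H}

@[simp]
lemma mem_ker_comp_sub_iff {ξ : W} :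
    ξ ∈ ker ((γ.comp ι - ι : W →L[𝕜] H) : W →ₗ[𝕜] H) ↔ γ (ι ξ) = ι ξ := by
  simp [sub_eq_zero]

@[simp]
lemma mem_ker_comp_add_iff {ξ : W} :
    ξ ∈ ker ((γ.comp ι + ι : W →L[𝕜] H) : W →ₗ[𝕜] H) ↔ γ (ι ξ) = -ι ξ := by
  simp [add_eq_zero_iff_eq_neg]

@[simp]
lemma mem_ker_add_one_iff {ψ : H} : ψ ∈ ker ((γ + 1 : H →L[𝕜] H) : H →ₗ[𝕜] H) ↔ γ ψ = -ψ := by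
  simp [add_eq_zero_iff_eq_neg]

lemma ker_neg_comp_sub :
    ker (((-γ).comp ι - ι : W →L[𝕜] H) : W →ₗ[𝕜] H) =
      ker ((γ.comp ι + ι : W →L[𝕜] H) : W →ₗ[𝕜] H) := by
  ext
  simp only [mem_ker_comp_sub_iff, mem_ker_comp_add_iff, _root_.neg_apply, neg_eq_iff_eq_neg]

lemma ker_neg_comp_add :
    ker (((-γ).comp ι + ι : W →L[𝕜] H) : W →ₗ[𝕜] H) =
      ker ((γ.comp ι - ι : W →L[𝕜] H) : W →ₗ[𝕜] H) := by
  ext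
  simp only [mem_ker_comp_sub_iff, mem_ker_comp_add_iff, _root_.neg_apply, neg_inj]

lemma IsSelfAdjoint.inner_eq_zero_of_eq_neg [CompleteSpace H] (hγ : IsSelfAdjoint γ) {p q : H}
    (hp : γ p = p) (hq : γ q = -q) : inner 𝕜 p q = 0 := by
  have h := hγ.isSymmetric.apply_clm p q
  rw [hp, hq, inner_neg_right] at h
  exact self_eq_neg.1 h

lemma exists_even_add_odd {γW : W →L[𝕜] W} (hγ : ∀ ψ, γ (γ ψ) = ψ)
    (hγW : ∀ ξ, ι (γW ξ) = γ (ι ξ)) (ξ : W) :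
    ∃ a b, γ (ι a) = ι a ∧ γ (ι b) = -ι b ∧ a + b = ξ := by
  refine ⟨(2 : 𝕜)⁻¹ • (ξ + γW ξ), (2 : 𝕜)⁻¹ • (ξ - γW ξ), ?_, ?_, ?_⟩
  · simp [hγW, hγ, add_comm]
  · simp [hγW, hγ, ← smul_neg]
  · module

structure IsOddOperator (ι D : W →L[𝕜] H) (γ : H →L[𝕜] H) (γW : W →L[𝕜] W) : Prop where
  injective : Function.Injective ι
  involutive : ∀ ψ, γ (γ ψ) = ψ
  comm : ∀ ξ, ι (γW ξ) = γ (ι ξ)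
  anticomm : ∀ ξ, D (γW ξ) = -γ (D ξ)

namespace IsOddOperator

variable {D : W →L[𝕜] H} {γW : W →L[𝕜] W}

lemma neg (hD : IsOddOperator ι D γ γW) : IsOddOperator ι D (-γ) (-γW) where
  injective := hD.injective
  involutive ψ := by simp [hD.involutive]
  comm ξ := by simp [hD.comm]
  anticomm ξ := by simp [hD.anticomm]

lemma apply_eq_neg (hD : IsOddOperator ι D γ γW) {ξ : W} (hξ : γ (ι ξ) = ι ξ) :
    γ (D ξ) = -D ξ := by
  have hγW : γW ξ = ξ := hD.injective (by rw [hD.comm, hξ])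
  have h := hD.anticomm ξ
  rw [hγW] at h
  nth_rewrite 1 [h]
  rw [map_neg, hD.involutive]

lemma apply_eq (hD : IsOddOperator ι D γ γW) {ξ : W} (hξ : γ (ι ξ) = -ι ξ) : γ (D ξ) = D ξ := by
  simpa using hD.neg.apply_eq_neg (ξ := ξ) (by rw [_root_.neg_apply, hξ, neg_neg])

lemma mapsTo (hD : IsOddOperator ι D γ γW) :
    ∀ ξ ∈ ker ((γ.comp ι - ι : W →L[𝕜] H) : W →ₗ[𝕜] H),
      D ξ ∈ ker ((γ + 1 : H →L[𝕜] H) : H →ₗ[𝕜] H) :=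
  fun _ hξ ↦ mem_ker_add_one_iff.2 (hD.apply_eq_neg (mem_ker_comp_sub_iff.1 hξ))

end IsOddOperator

end Grading

section SelfAdjoint

variable {H W : Type*} [NormedAddCommGroup H] [InnerProductSpace ℂ H]
  [NormedAddCommGroup W] [NormedSpace ℂ W] {ι D : W →L[ℂ] H}

/-- For `u ⟂ range D`, write `u = (D + i) ζ`. Then `⟪(D - i) η, D ζ⟫ = ⟪D η, u⟫ = 0` for all `η`,
and `D - i` is onto, so `D ζ = 0` and `u = ι (i ζ)`. -/
theorem orthogonal_range_eq_map_ker
    (h_symm : ∀ ξ η : W, inner ℂ (D ξ) (ι η) = inner ℂ (ι ξ) (D η))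
    (h_plus : ∀ ψ : H, ∃ ξ, D ξ + Complex.I • ι ξ = ψ)
    (h_minus : ∀ ψ : H, ∃ ξ, D ξ - Complex.I • ι ξ = ψ) :
    (range (D : W →ₗ[ℂ] H))ᗮ = map (ι : W →ₗ[ℂ] H) (ker (D : W →ₗ[ℂ] H)) := by
  ext u
  constructor
  · intro hu
    obtain ⟨ζ, rfl⟩ := h_plus u
    have key : ∀ η, inner ℂ (D η - Complex.I • ι η) (D ζ) = 0 := fun η ↦ by
      have h := (mem_orthogonal _ _).1 hu (D η) (mem_range_self _ η)
      rw [inner_add_right, inner_smul_right, h_symm] at h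
      rw [inner_sub_left, inner_smul_left, Complex.conj_I, ← h]
      ring
    obtain ⟨η, hη⟩ := h_minus (D ζ)
    have hDζ : D ζ = 0 := inner_self_eq_zero.1 (hη ▸ key η)
    exact ⟨Complex.I • ζ, by simp [hDζ], by simp [hDζ]⟩
  · rintro ⟨ζ, hζ, rfl⟩
    refine (mem_orthogonal _ _).2 ?_
    rintro _ ⟨ξ, rfl⟩
    simp [h_symm, show D ζ = 0 from hζ]

end SelfAdjoint

section OddSelfAdjoint

variable {H W : Type*} [NormedAddCommGroup H] [InnerProductSpace ℂ H]
  [NormedAddCommGroup W] [NormedSpace ℂ W] {ι D : W →L[ℂ] H} {γ : H →L[ℂ] H} {γW : W →L[ℂ] W}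

namespace IsOddOperator

lemma range_restrict (hD : IsOddOperator ι D γ γW) :
    range (D.restrict hD.mapsTo).toLinearMap =
      comap (ker ((γ + 1 : H →L[ℂ] H) : H →ₗ[ℂ] H)).subtype (range (D : W →ₗ[ℂ] H)) := by
  rw [ContinuousLinearMap.toLinearMap_restrict, LinearMap.range_restrict]
  ext ⟨y, hy⟩
  simp only [Submodule.mem_comap, subtype_apply, Submodule.mem_map, mem_range,
    ContinuousLinearMap.coe_coe]
  refine ⟨fun ⟨ξ, _, hξ⟩ ↦ ⟨ξ, hξ⟩, ?_⟩
  rintro ⟨ξ, rfl⟩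
  obtain ⟨a, b, ha, hb, rfl⟩ := exists_even_add_odd hD.involutive hD.comm ξ
  have hDb : D b = 0 := by
    have h := mem_ker_add_one_iff.1 hy
    rw [map_add, map_add, hD.apply_eq_neg ha, hD.apply_eq hb, neg_add] at h
    have := IsAddTorsionFree.of_isTorsionFree ℂ H
    exact self_eq_neg.1 (add_left_cancel h)
  exact ⟨a, mem_ker_comp_sub_iff.2 ha, by simp [hDb]⟩

variable [CompleteSpace H]

/-- An odd vector orthogonal to `D(W⁰)` is orthogonal to all of `range D`, because `D(W¹)` is
even. -/
lemma orthogonal_range_restrict (hD : IsOddOperator ι D γ γW) (hγ : IsSelfAdjoint γ)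
    (h_symm : ∀ ξ η : W, inner ℂ (D ξ) (ι η) = inner ℂ (ι ξ) (D η))
    (h_plus : ∀ ψ : H, ∃ ξ, D ξ + Complex.I • ι ξ = ψ)
    (h_minus : ∀ ψ : H, ∃ ξ, D ξ - Complex.I • ι ξ = ψ) :
    (range (D.restrict hD.mapsTo).toLinearMap)ᗮ =
      comap (ker ((γ + 1 : H →L[ℂ] H) : H →ₗ[ℂ] H)).subtype
        (map (ι : W →ₗ[ℂ] H)
          (ker (D : W →ₗ[ℂ] H) ⊓ ker ((γ.comp ι + ι : W →L[ℂ] H) : W →ₗ[ℂ] H))) := by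
  rw [hD.range_restrict]
  ext u
  have hu : γ u = -u := mem_ker_add_one_iff.1 u.2
  rw [mem_orthogonal, Submodule.mem_comap, subtype_apply]
  trans (u : H) ∈ (range (D : W →ₗ[ℂ] H))ᗮ
  · refine ⟨fun h ↦ (mem_orthogonal _ _).2 ?_, fun h v hv ↦ (mem_orthogonal _ _).1 h _ hv⟩
    rintro _ ⟨ξ, rfl⟩
    obtain ⟨a, b, ha, hb, rfl⟩ := exists_even_add_odd hD.involutive hD.comm ξ
    have hDa : inner ℂ (D a) (u : H) = 0 :=
      h ⟨D a, mem_ker_add_one_iff.2 (hD.apply_eq_neg ha)⟩ (mem_range_self (D : W →ₗ[ℂ] H) a)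
    have hDb : inner ℂ (D b) (u : H) = 0 := hγ.inner_eq_zero_of_eq_neg (hD.apply_eq hb) hu
    simp [inner_add_left, hDa, hDb]
  · rw [orthogonal_range_eq_map_ker h_symm h_plus h_minus]
    refine ⟨?_, fun h ↦ Submodule.map_mono inf_le_left h⟩
    rintro ⟨ζ, hζ, hζu⟩
    refine ⟨ζ, ⟨hζ, mem_ker_comp_add_iff.2 ?_⟩, hζu⟩
    simpa [← hζu] using hu

theorem index_restrict (hD : IsOddOperator ι D γ γW) (hγ : IsSelfAdjoint γ)
    (h_symm : ∀ ξ η : W, inner ℂ (D ξ) (ι η) = inner ℂ (ι ξ) (D η))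
    (h_plus : ∀ ψ : H, ∃ ξ, D ξ + Complex.I • ι ξ = ψ)
    (h_minus : ∀ ψ : H, ∃ ξ, D ξ - Complex.I • ι ξ = ψ)
    [FiniteDimensional ℂ (ker (D : W →ₗ[ℂ] H))]
    (h_closed : IsClosed (range (D : W →ₗ[ℂ] H) : Set H)) :
    FiniteDimensional ℂ (ker (D.restrict hD.mapsTo).toLinearMap) ∧
    FiniteDimensional ℂ
      (ker ((γ + 1 : H →L[ℂ] H) : H →ₗ[ℂ] H) ⧸ range (D.restrict hD.mapsTo).toLinearMap) ∧
    IsClosed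
      (range (D.restrict hD.mapsTo).toLinearMap : Set (ker ((γ + 1 : H →L[ℂ] H) : H →ₗ[ℂ] H))) ∧
    (D.restrict hD.mapsTo).toLinearMap.index =
      finrank ℂ ↥(ker (D : W →ₗ[ℂ] H) ⊓ ker ((γ.comp ι - ι : W →L[ℂ] H) : W →ₗ[ℂ] H)) -
      finrank ℂ ↥(ker (D : W →ₗ[ℂ] H) ⊓ ker ((γ.comp ι + ι : W →L[ℂ] H) : W →ₗ[ℂ] H)) := by
  have hker : ker (D.restrict hD.mapsTo).toLinearMap =
      comap (ker ((γ.comp ι - ι : W →L[ℂ] H) : W →ₗ[ℂ] H)).subtype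
        (ker (D : W →ₗ[ℂ] H) ⊓ ker ((γ.comp ι - ι : W →L[ℂ] H) : W →ₗ[ℂ] H)) := by
    rw [ContinuousLinearMap.toLinearMap_restrict, ker_restrict, Submodule.comap_inf,
      comap_subtype_self, inf_top_eq]
  set Weven := ker ((γ.comp ι - ι : W →L[ℂ] H) : W →ₗ[ℂ] H)
  set Wodd := ker ((γ.comp ι + ι : W →L[ℂ] H) : W →ₗ[ℂ] H)
  set Hodd := ker ((γ + 1 : H →L[ℂ] H) : H →ₗ[ℂ] H)
  set Dplus := (D.restrict hD.mapsTo).toLinearMap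
  have eK : ker Dplus ≃ₗ[ℂ] ↥(ker (D : W →ₗ[ℂ] H) ⊓ Weven) :=
    (LinearEquiv.ofEq _ _ hker).trans (comapSubtypeEquivOfLe inf_le_right)
  have hcl : IsClosed (range Dplus : Set Hodd) := by
    rw [hD.range_restrict]; exact h_closed.preimage continuous_subtype_val
  have : CompleteSpace Hodd := (ContinuousLinearMap.isClosed_ker _).completeSpace_coe
  have : CompleteSpace (range Dplus) := hcl.completeSpace_coe
  have hle : map (ι : W →ₗ[ℂ] H) (ker (D : W →ₗ[ℂ] H) ⊓ Wodd) ≤ Hodd := by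
    rintro _ ⟨ζ, ⟨-, hζ⟩, rfl⟩
    exact mem_ker_add_one_iff.2 (mem_ker_comp_add_iff.1 hζ)
  have eC : (Hodd ⧸ range Dplus) ≃ₗ[ℂ] ↥(ker (D : W →ₗ[ℂ] H) ⊓ Wodd) :=
    (quotientEquivOfIsCompl _ _ (isCompl_orthogonal _)).trans <|
      (LinearEquiv.ofEq _ _ (hD.orthogonal_range_restrict hγ h_symm h_plus h_minus)).trans <|
        (comapSubtypeEquivOfLe hle).trans (equivMapOfInjective _ hD.injective _).symm
  refine ⟨Module.Finite.equiv eK.symm, Module.Finite.equiv eC.symm, hcl, ?_⟩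
  rw [index_eq_finrank_sub, eK.finrank_eq, eC.finrank_eq]

theorem index_restrict_neg (hD : IsOddOperator ι D γ γW) (hγ : IsSelfAdjoint γ)
    (h_symm : ∀ ξ η : W, inner ℂ (D ξ) (ι η) = inner ℂ (ι ξ) (D η))
    (h_plus : ∀ ψ : H, ∃ ξ, D ξ + Complex.I • ι ξ = ψ)
    (h_minus : ∀ ψ : H, ∃ ξ, D ξ - Complex.I • ι ξ = ψ)
    [FiniteDimensional ℂ (ker (D : W →ₗ[ℂ] H))]
    (h_closed : IsClosed (range (D : W →ₗ[ℂ] H) : Set H)) :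
    FiniteDimensional ℂ (ker (D.restrict hD.neg.mapsTo).toLinearMap) ∧
    FiniteDimensional ℂ
      (ker ((-γ + 1 : H →L[ℂ] H) : H →ₗ[ℂ] H) ⧸ range (D.restrict hD.neg.mapsTo).toLinearMap) ∧
    (D.restrict hD.neg.mapsTo).toLinearMap.index =
      finrank ℂ ↥(ker (D : W →ₗ[ℂ] H) ⊓ ker ((γ.comp ι + ι : W →L[ℂ] H) : W →ₗ[ℂ] H)) -
      finrank ℂ ↥(ker (D : W →ₗ[ℂ] H) ⊓ ker ((γ.comp ι - ι : W →L[ℂ] H) : W →ₗ[ℂ] H)) := by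
  obtain ⟨h_ker, h_coker, -, h_index⟩ :=
    hD.neg.index_restrict hγ.neg h_symm h_plus h_minus h_closed
  refine ⟨h_ker, h_coker, ?_⟩
  rw [h_index, ker_neg_comp_sub, ker_neg_comp_add]

end IsOddOperator

end OddSelfAdjoint

section OddInvolution

variable {H W : Type*} [NormedAddCommGroup H] [InnerProductSpace ℂ H]
  [NormedAddCommGroup W] [NormedSpace ℂ W] {ι D : W →L[ℂ] H} {γ e : H →L[ℂ] H}
  {γW eW : W →L[ℂ] W}

lemma mapsTo_ker_add_one_of_anticomm (he : ∀ ψ, e (γ ψ) = -γ (e ψ)) :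
    ∀ ψ ∈ ker ((-γ + 1 : H →L[ℂ] H) : H →ₗ[ℂ] H),
      (-e) ψ ∈ ker ((γ + 1 : H →L[ℂ] H) : H →ₗ[ℂ] H) := by
  intro ψ hψ
  rw [mem_ker_add_one_iff] at hψ ⊢
  rw [_root_.neg_apply, neg_inj] at hψ
  rw [_root_.neg_apply, map_neg, neg_neg, ← he, hψ]

lemma mapsTo_ker_comp_sub_of_anticomm (he : ∀ ψ, e (γ ψ) = -γ (e ψ))
    (heW : ∀ ξ, ι (eW ξ) = e (ι ξ)) :
    ∀ ξ ∈ ker ((γ.comp ι - ι : W →L[ℂ] H) : W →ₗ[ℂ] H),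
      eW ξ ∈ ker (((-γ).comp ι - ι : W →L[ℂ] H) : W →ₗ[ℂ] H) := by
  intro ξ hξ
  rw [mem_ker_comp_sub_iff] at hξ ⊢
  rw [heW, _root_.neg_apply, ← he, hξ]

lemma bijective_restrict_neg_of_anticomm (he_unit : ∀ ψ, e (e ψ) = ψ)
    (he : ∀ ψ, e (γ ψ) = -γ (e ψ)) :
    Function.Bijective ((-e).restrict (mapsTo_ker_add_one_of_anticomm he)) := by
  refine ContinuousLinearMap.bijective_restrict_of_inverse (g := -e) _ (fun ψ hψ ↦ ?_)
    (by simp [he_unit]) (by simp [he_unit])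
  rw [mem_ker_add_one_iff] at hψ ⊢
  rw [_root_.neg_apply, _root_.neg_apply, map_neg, neg_neg, ← neg_neg (γ (e ψ)), ← he, hψ,
    map_neg]

lemma bijective_restrict_of_anticomm (hι : Function.Injective ι) (he_unit : ∀ ψ, e (e ψ) = ψ)
    (he : ∀ ψ, e (γ ψ) = -γ (e ψ)) (heW : ∀ ξ, ι (eW ξ) = e (ι ξ)) :
    Function.Bijective (eW.restrict (mapsTo_ker_comp_sub_of_anticomm he heW)) := by
  have heW_unit : ∀ ξ, eW (eW ξ) = ξ := fun ξ ↦ hι (by rw [heW, heW, he_unit])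
  refine ContinuousLinearMap.bijective_restrict_of_inverse _ (fun ξ hξ ↦ ?_) heW_unit heW_unit
  rw [mem_ker_comp_sub_iff] at hξ ⊢
  rw [_root_.neg_apply, neg_eq_iff_eq_neg] at hξ
  rw [heW, ← neg_neg (γ (e (ι ξ))), ← he, hξ, map_neg, neg_neg]

namespace IsOddOperator

/-- On the even part, `-e D e - D = -e A ι` and `A ι = (A ι Rp) (D + i ι)`. -/
lemma isCompactOperator_conj_sub (hD : IsOddOperator ι D γ γW) {A : H →L[ℂ] H} {Rp : H →L[ℂ] W}
    (he_unit : ∀ ψ, e (e ψ) = ψ) (he : ∀ ψ, e (γ ψ) = -γ (e ψ)) (heW : ∀ ξ, ι (eW ξ) = e (ι ξ))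
    (hA : ∀ ξ, A (ι ξ) = D (eW ξ) + e (D ξ)) (hRp : ∀ ξ, Rp (D ξ + Complex.I • ι ξ) = ξ)
    (hA_cpt : IsCompactOperator (A.comp (ι.comp Rp))) :
    IsCompactOperator ((-e).restrict (mapsTo_ker_add_one_of_anticomm he) ∘L
      D.restrict hD.neg.mapsTo ∘L eW.restrict (mapsTo_ker_comp_sub_of_anticomm he heW) -
        D.restrict hD.mapsTo) := by
  have hAι : IsCompactOperator (A ∘L ι) := by
    have h : A ∘L ι = A.comp (ι.comp Rp) ∘L (D + Complex.I • ι) := by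
      ext ξ
      simp only [ContinuousLinearMap.comp_apply, _root_.add_apply, _root_.smul_apply, hRp]
    rw [h]
    exact hA_cpt.comp_clm _
  have h : (ker ((γ + 1 : H →L[ℂ] H) : H →ₗ[ℂ] H)).subtypeL ∘L
      ((-e).restrict (mapsTo_ker_add_one_of_anticomm he) ∘L
        D.restrict hD.neg.mapsTo ∘L eW.restrict (mapsTo_ker_comp_sub_of_anticomm he heW) -
        D.restrict hD.mapsTo) =
      (-e) ∘L (A ∘L ι) ∘L (ker ((γ.comp ι - ι : W →L[ℂ] H) : W →ₗ[ℂ] H)).subtypeL := by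
    ext ξ
    change -e (D (eW ξ)) - D ξ = -e (A (ι ξ))
    rw [hA, map_add, he_unit, neg_add]
    abel
  have hcpt :=
    (hAι.comp_clm (ker ((γ.comp ι - ι : W →L[ℂ] H) : W →ₗ[ℂ] H)).subtypeL).clm_comp (-e)
  rw [← ContinuousLinearMap.coe_comp, ← ContinuousLinearMap.coe_comp, ← h] at hcpt
  exact hcpt.codRestrict _ (ContinuousLinearMap.isClosed_ker _)

/-- The perturbation is `-e D₋ e`, with `D₋` the restriction of `D` to the odd part. -/
theorem exists_isCompactOperator_sub_index_eq (hD : IsOddOperator ι D γ γW) {A : H →L[ℂ] H}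
    {Rp : H →L[ℂ] W} (he_unit : ∀ ψ, e (e ψ) = ψ) (he : ∀ ψ, e (γ ψ) = -γ (e ψ))
    (heW : ∀ ξ, ι (eW ξ) = e (ι ξ)) (hA : ∀ ξ, A (ι ξ) = D (eW ξ) + e (D ξ))
    (hRp : ∀ ξ, Rp (D ξ + Complex.I • ι ξ) = ξ) (hA_cpt : IsCompactOperator (A.comp (ι.comp Rp)))
    [FiniteDimensional ℂ (ker (D.restrict hD.neg.mapsTo).toLinearMap)]
    [FiniteDimensional ℂ
      (ker ((-γ + 1 : H →L[ℂ] H) : H →ₗ[ℂ] H) ⧸ range (D.restrict hD.neg.mapsTo).toLinearMap)] :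
    ∃ S : ker ((γ.comp ι - ι : W →L[ℂ] H) : W →ₗ[ℂ] H) →L[ℂ]
        ker ((γ + 1 : H →L[ℂ] H) : H →ₗ[ℂ] H),
      FiniteDimensional ℂ (ker S.toLinearMap) ∧
      FiniteDimensional ℂ (ker ((γ + 1 : H →L[ℂ] H) : H →ₗ[ℂ] H) ⧸ range S.toLinearMap) ∧
      S.toLinearMap.index = (D.restrict hD.neg.mapsTo).toLinearMap.index ∧
      IsCompactOperator (S - D.restrict hD.mapsTo) := by
  obtain ⟨h_ker, h_coker, h_index⟩ :=
    index_comp_comp_of_bijective (f := (D.restrict hD.neg.mapsTo).toLinearMap)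
      (bijective_restrict_neg_of_anticomm he_unit he)
      (bijective_restrict_of_anticomm hD.injective he_unit he heW)
  exact ⟨(-e).restrict (mapsTo_ker_add_one_of_anticomm he) ∘L D.restrict hD.neg.mapsTo ∘L
    eW.restrict (mapsTo_ker_comp_sub_of_anticomm he heW), h_ker, h_coker, h_index,
    hD.isCompactOperator_conj_sub he_unit he heW hA hRp hA_cpt⟩

end IsOddOperator

end OddInvolution

theorem cliff_triv_general
    {H : Type*} [NormedAddCommGroup H] [InnerProductSpace ℂ H] [CompleteSpace H]
    {W : Type*} [NormedAddCommGroup W] [NormedSpace ℂ W] [CompleteSpace W]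
    (ι : W →L[ℂ] H) (hι_inj : Function.Injective ι)
    (γ : H →L[ℂ] H) (hγ_sa : IsSelfAdjoint γ) (hγ_unit : ∀ ψ : H, γ (γ ψ) = ψ)
    (D : W →L[ℂ] H)
    (h_symm : ∀ ξ η : W, (inner ℂ (D ξ) (ι η) : ℂ) = inner ℂ (ι ξ) (D η))
    (Rp Rm : H →L[ℂ] W)
    (hRp1 : ∀ ψ : H, D (Rp ψ) + Complex.I • ι (Rp ψ) = ψ)
    (hRp2 : ∀ ξ : W, Rp (D ξ + Complex.I • ι ξ) = ξ)
    (hRm1 : ∀ ψ : H, D (Rm ψ) - Complex.I • ι (Rm ψ) = ψ)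
    (γW : W →L[ℂ] W) (hγW : ∀ ξ : W, ι (γW ξ) = γ (ι ξ))
    (h_odd : ∀ ξ : W, D (γW ξ) = - γ (D ξ))
    (h_ker_fin : FiniteDimensional ℂ ↥(LinearMap.ker (D : W →ₗ[ℂ] H)))
    (h_ran_closed : IsClosed ((LinearMap.range (D : W →ₗ[ℂ] H) : Submodule ℂ H) : Set H))
    (e : H →L[ℂ] H) (he_unit : ∀ ψ : H, e (e ψ) = ψ)
    (he_odd : ∀ ψ : H, e (γ ψ) = - γ (e ψ))
    (eW : W →L[ℂ] W) (heW : ∀ ξ : W, ι (eW ξ) = e (ι ξ))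
    (A : H →L[ℂ] H)
    (hA : ∀ ξ : W, A (ι ξ) = D (eW ξ) + e (D ξ))
    (hA_cpt : IsCompactOperator ⇑(A.comp (ι.comp Rp))) :
    Module.finrank ℂ ↥(LinearMap.ker (D : W →ₗ[ℂ] H) ⊓ LinearMap.ker ((γ.comp ι - ι : W →L[ℂ] H) : W →ₗ[ℂ] H)) =
    Module.finrank ℂ ↥(LinearMap.ker (D : W →ₗ[ℂ] H) ⊓ LinearMap.ker ((γ.comp ι + ι : W →L[ℂ] H) : W →ₗ[ℂ] H)) := by
  have hD : IsOddOperator ι D γ γW := ⟨hι_inj, hγ_unit, hγW, h_odd⟩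
  have h_plus (ψ : H) : ∃ ξ, D ξ + Complex.I • ι ξ = ψ := ⟨Rp ψ, hRp1 ψ⟩
  have h_minus (ψ : H) : ∃ ξ, D ξ - Complex.I • ι ξ = ψ := ⟨Rm ψ, hRm1 ψ⟩
  obtain ⟨_, _, h_closed, h_index_plus⟩ :=
    hD.index_restrict hγ_sa h_symm h_plus h_minus h_ran_closed
  obtain ⟨_, _, h_index_minus⟩ := hD.index_restrict_neg hγ_sa h_symm h_plus h_minus h_ran_closed
  obtain ⟨S, _, _, h_index_S, h_cpt⟩ :=
    hD.exists_isCompactOperator_sub_index_eq he_unit he_odd heW hA hRp2 hA_cpt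
  have h_stable := ContinuousLinearMap.index_eq_of_isCompactOperator_sub _ S h_closed h_cpt
  omega

/-- Hilbert-space case of Lemma 4.1, `cliff_triv`.
`H` is a ℤ₂-graded Hilbert space with grading `γ` (a bounded self-adjoint unitary), with
even part `ker(γ − 1)` and odd part `ker(γ + 1)`.  `D` is an odd self-adjoint Fredholm
operator with dense domain `W` (abstract encoding: complete normed space `W` with
injective dense inclusion `ι : W →L[ℂ] H` carrying the graph norm; self-adjointness =
symmetry plus the bounded resolvents `Rp = (D+i)⁻¹`, `Rm = (D−i)⁻¹`; oddness via
`γW : W → W` covering `γ` with `D ∘ γW = −γ ∘ D`; Fredholm = finite-dimensional kernel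
and closed range).  `e` is a bounded self-adjoint unitary, odd w.r.t. `γ`, preserving the
domain (via `eW` covering `e`), whose graded anticommutator with `D` extends to a bounded
operator `A` with `A ∘ (D+i)⁻¹` compact.  Then
`dim(ker D ∩ H⁰) = dim(ker D ∩ H¹)`, i.e. the index of `D₊` is zero. -/
theorem cliff_triv
    {H : Type*} [NormedAddCommGroup H] [InnerProductSpace ℂ H] [CompleteSpace H]
    {W : Type*} [NormedAddCommGroup W] [NormedSpace ℂ W] [CompleteSpace W]
    (ι : W →L[ℂ] H) (hι_inj : Function.Injective ι) (hι_dense : DenseRange ι)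
    (γ : H →L[ℂ] H) (hγ_sa : IsSelfAdjoint γ) (hγ_unit : ∀ ψ : H, γ (γ ψ) = ψ)
    (D : W →L[ℂ] H)
    (h_graph : ∀ ξ : W, ‖ξ‖ ^ 2 = ‖ι ξ‖ ^ 2 + ‖D ξ‖ ^ 2)
    (h_symm : ∀ ξ η : W, (inner ℂ (D ξ) (ι η) : ℂ) = inner ℂ (ι ξ) (D η))
    (Rp Rm : H →L[ℂ] W)
    (hRp1 : ∀ ψ : H, D (Rp ψ) + Complex.I • ι (Rp ψ) = ψ)
    (hRp2 : ∀ ξ : W, Rp (D ξ + Complex.I • ι ξ) = ξ)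
    (hRm1 : ∀ ψ : H, D (Rm ψ) - Complex.I • ι (Rm ψ) = ψ)
    (hRm2 : ∀ ξ : W, Rm (D ξ - Complex.I • ι ξ) = ξ)
    (γW : W →L[ℂ] W) (hγW : ∀ ξ : W, ι (γW ξ) = γ (ι ξ))
    (h_odd : ∀ ξ : W, D (γW ξ) = - γ (D ξ))
    (h_ker_fin : FiniteDimensional ℂ ↥(LinearMap.ker (D : W →ₗ[ℂ] H)))
    (h_ran_closed : IsClosed ((LinearMap.range (D : W →ₗ[ℂ] H) : Submodule ℂ H) : Set H))
    (e : H →L[ℂ] H) (he_sa : IsSelfAdjoint e) (he_unit : ∀ ψ : H, e (e ψ) = ψ)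
    (he_odd : ∀ ψ : H, e (γ ψ) = - γ (e ψ))
    (eW : W →L[ℂ] W) (heW : ∀ ξ : W, ι (eW ξ) = e (ι ξ))
    (A : H →L[ℂ] H)
    (hA : ∀ ξ : W, A (ι ξ) = D (eW ξ) + e (D ξ))
    (hA_cpt : IsCompactOperator ⇑(A.comp (ι.comp Rp))) :
    Module.finrank ℂ ↥(LinearMap.ker (D : W →ₗ[ℂ] H) ⊓ LinearMap.ker ((γ.comp ι - ι : W →L[ℂ] H) : W →ₗ[ℂ] H)) =
    Module.finrank ℂ ↥(LinearMap.ker (D : W →ₗ[ℂ] H) ⊓ LinearMap.ker ((γ.comp ι + ι : W →L[ℂ] H) : W →ₗ[ℂ] H)) :=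
  cliff_triv_general ι hι_inj γ hγ_sa hγ_unit D h_symm Rp Rm hRp1 hRp2 hRm1 γW hγW h_odd h_ker_fin
    h_ran_closed e he_unit he_odd eW heW A hA hA_cpt
end
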